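/- arXiv:1406.6736 — 11 statements merged into one kernel-verified Lean document; each statement's English description precedes it below -/
import Mathlib

section
/- Let 2√(log n / n) ≤ p ≤ 1 − 2√(log n / n). Then asymptotically almost surely, the random graph G(n,p) and its complement both have diameter at most 2, and all vertex degrees of G(n,p) are at most 2np. -/
open scoped Classical

/-- The simple graph on `Fin n` determined by an indicator function on unordered pairs. -/
def graphOf {n : ℕ} (σ : Sym2 (Fin n) → Bool) : SimpleGraph (Fin n) where
  Adj u v := u ≠ v ∧ σ s(u, v)
  symm := ⟨fun u v h => ⟨h.1.symm, by rw [Sym2.eq_swap]; exact h.2⟩⟩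
  loopless := ⟨fun u h => h.1 rfl⟩

/-- The Erdős–Rényi measure `G(n,p)`: each unordered pair is an edge independently with
probability `p`. -/
noncomputable def erdosRenyi (n : ℕ) (p : ℝ) (hp : ENNReal.ofReal p ≤ 1) :
    MeasureTheory.Measure (Sym2 (Fin n) → Bool) :=
  MeasureTheory.Measure.pi fun _ => (PMF.bernoulli p.toNNReal (ENNReal.coe_le_one_iff.mp hp)).toMeasure

/-!
A pair `u ≠ v` fails to have a common neighbour with probability `(1 - p²)^(n-2)`: the `n - 2`
events "`w` is adjacent to both" concern disjoint pairs of edges, hence are independent. For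
`p² ≥ 4 log n / n` this is at most `n⁻³`, so a union bound over pairs bounds the diameter of
`G(n,p)`; the complement is `G(n, 1-p)` and `1 - p` satisfies the same bound. For the degrees,
`2 ^ deg v` has mean at most `(1 + p)^n ≤ e^{np}`, so Markov's inequality gives
`P(deg v > 2np) ≤ e^{np} 2^{-2np} ≤ e^{-np/4} ≤ e^{-√n/2}`, using `np ≥ 2√n`.
Altogether the failure probability is at most `386 / n`.
-/

open scoped ENNReal
open MeasureTheory Finset Function

section ProductMeasure

variable {β : Type*} [MeasurableSpace β]

theorem measurePreserving_pi_comp_of_injective (μ : Measure β) [IsProbabilityMeasure μ]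
    {ι κ : Type*} [Fintype ι] [Fintype κ] {c : κ → ι} (hc : Injective c) :
    MeasurePreserving (fun x : ι → β => x ∘ c) (Measure.pi fun _ => μ) (Measure.pi fun _ => μ) := by
  refine ⟨by fun_prop, (Measure.pi_eq fun s hs => ?_).symm⟩
  have hpre : (fun x : ι → β => x ∘ c) ⁻¹' Set.univ.pi s
      = Set.univ.pi (extend c s fun _ => Set.univ) := by
    ext x
    simp only [Set.mem_preimage, Set.mem_univ_pi, comp_apply]
    refine ⟨fun h i => ?_, fun h j => by simpa [hc.extend_apply] using h (c j)⟩
    by_cases hi : ∃ j, c j = i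
    · obtain ⟨j, rfl⟩ := hi
      simpa [hc.extend_apply] using h j
    · simp [extend_apply' _ _ _ hi]
  rw [Measure.map_apply (by fun_prop) (.univ_pi hs), hpre, Measure.pi_pi,
    ← prod_subset (subset_univ (univ.map ⟨c, hc⟩)), prod_map]
  · simp [hc.extend_apply]
  · intro i _ hi
    have : ¬∃ j, c j = i := by simpa using hi
    simp [extend_apply' _ _ _ this]

theorem measurePreserving_pi_uncurry (μ : Measure β) [SigmaFinite μ] {κ K : Type*} [Fintype κ]
    [Fintype K] :
    MeasurePreserving (uncurry : (κ → K → β) → κ × K → β)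
      (Measure.pi fun _ => Measure.pi fun _ => μ) (Measure.pi fun _ => μ) := by
  refine ⟨by fun_prop, (Measure.pi_eq fun s hs => ?_).symm⟩
  have hpre : (uncurry : (κ → K → β) → κ × K → β) ⁻¹' Set.univ.pi s
      = Set.univ.pi fun k => Set.univ.pi fun j => s (k, j) := by
    ext y; simp
  rw [Measure.map_apply (by fun_prop) (.univ_pi hs), hpre, Measure.pi_pi]
  simp_rw [Measure.pi_pi, Fintype.prod_prod_type]

theorem measure_pi_forall_block_mem (μ : Measure β) [IsProbabilityMeasure μ] {ι κ K : Type*}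
    [Fintype ι] [Fintype κ] [Fintype K] {c : κ × K → ι} (hc : Injective c) {B : κ → Set (K → β)}
    (hB : ∀ k, MeasurableSet (B k)) :
    (Measure.pi fun _ => μ) {x | ∀ k, (fun j => x (c (k, j))) ∈ B k}
      = ∏ k, (Measure.pi fun _ => μ) (B k) := by
  set A : Set (κ × K → β) := {z | ∀ k, (fun j => z (k, j)) ∈ B k}
  have hA : MeasurableSet A := by
    have hA_eq : A = (fun z k j => z (k, j)) ⁻¹' Set.univ.pi B := by ext; simp [A]
    exact hA_eq ▸ (MeasurableSet.univ_pi hB).preimage (by fun_prop)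
  calc (Measure.pi fun _ => μ) ((fun x : ι → β => x ∘ c) ⁻¹' A)
      = (Measure.pi fun _ => μ) A :=
        (measurePreserving_pi_comp_of_injective μ hc).measure_preimage hA.nullMeasurableSet
    _ = (Measure.pi fun _ => Measure.pi fun _ => μ) (uncurry ⁻¹' A) :=
        ((measurePreserving_pi_uncurry μ).measure_preimage hA.nullMeasurableSet).symm
    _ = ∏ k, (Measure.pi fun _ => μ) (B k) := by
        rw [← Measure.pi_pi]; congr 1; ext; simp [A]

theorem lintegral_pi_prod_eq_pow [Fintype β] [MeasurableSingletonClass β] (μ : Measure β)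
    [SigmaFinite μ] {κ : Type*} [Fintype κ] (g : β → ℝ≥0∞) :
    ∫⁻ x, ∏ j, g (x j) ∂(Measure.pi fun _ : κ => μ) = (∫⁻ b, g b ∂μ) ^ Fintype.card κ := by
  simp_rw [lintegral_fintype, ← Set.univ_pi_singleton, Measure.pi_pi, ← prod_mul_distrib]
  rw [← Fintype.prod_sum (fun _ b => g b * μ {b}), prod_const, card_univ]

end ProductMeasure

theorem measure_iUnion_le_ofReal_card_mul {α ι : Type*} [MeasurableSpace α] [Fintype ι]
    (μ : Measure α) {s : ι → Set α} {x : ℝ} (h : ∀ i, μ (s i) ≤ ENNReal.ofReal x) :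
    μ (⋃ i, s i) ≤ ENNReal.ofReal (Fintype.card ι * x) :=
  calc μ (⋃ i, s i) ≤ ∑ i, μ (s i) := measure_iUnion_fintype_le μ s
    _ ≤ ∑ _i : ι, ENNReal.ofReal x := sum_le_sum fun i _ => h i
    _ = ENNReal.ofReal (Fintype.card ι * x) := by
      rw [sum_const, card_univ, nsmul_eq_mul, ENNReal.ofReal_mul (Nat.cast_nonneg _),
        ENNReal.ofReal_natCast]

theorem SimpleGraph.ediam_le_two_of_forall_exists_adj_adj {V : Type*} (G : SimpleGraph V)
    (h : ∀ u v, u ≠ v → ∃ w, G.Adj u w ∧ G.Adj w v) : G.ediam ≤ 2 := by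
  refine G.ediam_le_of_edist_le fun u v => ?_
  rcases eq_or_ne u v with rfl | huv
  · simp
  obtain ⟨w, huw, hwv⟩ := h u v huv
  simpa using (Walk.cons huw (Walk.cons hwv .nil)).edist_le

variable {n : ℕ}

/-- The pairs `e` with `σ e = b` are the edges of `graphOf σ` for `b = true` and of its
complement for `b = false`. -/
def NoCommonNeighbor (b : Bool) (u v : Fin n) : Set (Sym2 (Fin n) → Bool) :=
  {σ | u ≠ v ∧ ∀ w, w ≠ u → w ≠ v → ¬(σ s(u, w) = b ∧ σ s(v, w) = b)}

theorem exists_common_of_notMem_noCommonNeighbor {σ : Sym2 (Fin n) → Bool} {b : Bool}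
    {u v : Fin n} (huv : u ≠ v) (h : σ ∉ NoCommonNeighbor b u v) :
    ∃ w, w ≠ u ∧ w ≠ v ∧ σ s(u, w) = b ∧ σ s(w, v) = b := by
  simpa [NoCommonNeighbor, huv, Sym2.eq_swap] using h

theorem ediam_graphOf_le_two {σ : Sym2 (Fin n) → Bool}
    (h : ∀ u v, σ ∉ NoCommonNeighbor true u v) : (graphOf σ).ediam ≤ 2 := by
  refine (graphOf σ).ediam_le_two_of_forall_exists_adj_adj fun u v huv => ?_
  obtain ⟨w, hwu, hwv, huw, hwv'⟩ := exists_common_of_notMem_noCommonNeighbor huv (h u v)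
  exact ⟨w, ⟨hwu.symm, huw⟩, ⟨hwv, hwv'⟩⟩

theorem ediam_compl_graphOf_le_two {σ : Sym2 (Fin n) → Bool}
    (h : ∀ u v, σ ∉ NoCommonNeighbor false u v) : (graphOf σ)ᶜ.ediam ≤ 2 := by
  refine (graphOf σ)ᶜ.ediam_le_two_of_forall_exists_adj_adj fun u v huv => ?_
  obtain ⟨w, hwu, hwv, huw, hwv'⟩ := exists_common_of_notMem_noCommonNeighbor huv (h u v)
  exact ⟨w, ⟨hwu.symm, by simp [graphOf, huw]⟩, ⟨hwv, by simp [graphOf, hwv']⟩⟩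

section RandomEdges

variable (μ : Measure Bool) [IsProbabilityMeasure μ]

theorem measure_pi_noCommonNeighbor_le (b : Bool) (u v : Fin n) :
    (Measure.pi fun _ => μ) (NoCommonNeighbor b u v) ≤ (1 - μ {b} ^ 2) ^ (n - 2) := by
  rcases eq_or_ne u v with rfl | huv
  · simp [NoCommonNeighbor]
  let W := {w // w ≠ u ∧ w ≠ v}
  have hW : Fintype.card W = n - 2 := by
    have : (univ.filter fun w => w ≠ u ∧ w ≠ v) = ({u, v} : Finset (Fin n))ᶜ := by ext; simp
    rw [Fintype.card_subtype, this, card_compl, card_pair huv, Fintype.card_fin]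
  let c : W × Bool → Sym2 (Fin n) := fun x => s(if x.2 then u else v, x.1)
  have hc : Injective c := by
    rintro ⟨⟨w, hwu, hwv⟩, i⟩ ⟨⟨w', hwu', hwv'⟩, i'⟩ h
    simp only [c, Sym2.eq_iff] at h
    cases i <;> cases i' <;> grind
  let B : Set (Bool → Bool) := {y | ¬(y true = b ∧ y false = b)}
  have hB : (Measure.pi fun _ => μ) B = 1 - μ {b} ^ 2 := by
    have : B = (Set.univ.pi fun _ => {b})ᶜ := by ext y; simp [B, and_comm]
    rw [this, prob_compl_eq_one_sub (.univ_pi fun _ => measurableSet_singleton b),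
      Measure.pi_pi, Fintype.prod_bool, sq]
  calc (Measure.pi fun _ => μ) (NoCommonNeighbor b u v)
      ≤ (Measure.pi fun _ => μ) {σ | ∀ w : W, (fun i => σ (c (w, i))) ∈ B} := by
        refine measure_mono fun σ hσ w => ?_
        simpa [B, c] using hσ.2 w w.2.1 w.2.2
    _ = (1 - μ {b} ^ 2) ^ (n - 2) := by
        rw [measure_pi_forall_block_mem μ hc fun _ => .of_discrete, hB, prod_const, card_univ, hW]

theorem measure_pi_le_degree_le (v : Fin n) (k : ℕ) :
    (Measure.pi fun _ => μ) {σ | k ≤ (graphOf σ).degree v} ≤ (1 + μ {true}) ^ n / 2 ^ k := by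
  let g : Bool → ℝ≥0∞ := fun b => if b then 2 else 1
  -- the loop coordinate `s(v, v)` is harmlessly included in the product
  have hdeg : ∀ σ, (2 : ℝ≥0∞) ^ (graphOf σ).degree v ≤ ∏ u, g (σ s(v, u)) := by
    intro σ
    rw [prod_ite, prod_const, prod_const_one, mul_one]
    refine pow_le_pow_right₀ one_le_two (card_le_card fun u hu => ?_)
    simpa using ((graphOf σ).mem_neighborFinset v u).1 hu |>.2
  have hc : Injective fun u : Fin n => s(v, u) := fun _ _ h => Sym2.congr_right.1 h
  have hint : ∫⁻ σ, ∏ u, g (σ s(v, u)) ∂(Measure.pi fun _ => μ) = (1 + μ {true}) ^ n := by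
    have hsum : μ {true} + μ {false} = 1 := by
      rw [← measure_univ (μ := μ), ← coe_univ, ← sum_measure_singleton, Fintype.sum_bool]
    refine ((measurePreserving_pi_comp_of_injective μ hc).lintegral_comp
      (f := fun x => ∏ u, g (x u)) .of_discrete).trans ?_
    rw [lintegral_pi_prod_eq_pow, lintegral_fintype, Fintype.sum_bool,
      Fintype.card_fin, ← hsum]
    simp only [g, if_true, Bool.false_eq_true, if_false, one_mul, two_mul]
    ring
  calc (Measure.pi fun _ => μ) {σ | k ≤ (graphOf σ).degree v}
      ≤ (Measure.pi fun _ => μ) {σ | 2 ^ k ≤ ∏ u, g (σ s(v, u))} :=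
        measure_mono fun σ hσ => (pow_le_pow_right₀ one_le_two hσ).trans (hdeg σ)
    _ ≤ (∫⁻ σ, ∏ u, g (σ s(v, u)) ∂(Measure.pi fun _ => μ)) / 2 ^ k :=
        meas_ge_le_lintegral_div Measurable.of_discrete.aemeasurable (by simp) (by simp)
    _ = (1 + μ {true}) ^ n / 2 ^ k := by rw [hint]

end RandomEdges

instance isProbabilityMeasure_erdosRenyi (n : ℕ) (p : ℝ) (hp : ENNReal.ofReal p ≤ 1) :
    IsProbabilityMeasure (erdosRenyi n p hp) := by
  unfold erdosRenyi; infer_instance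

theorem bernoulli_toMeasure_singleton {p : ℝ} (hp0 : 0 ≤ p) (hp : ENNReal.ofReal p ≤ 1)
    (b : Bool) :
    (PMF.bernoulli p.toNNReal (ENNReal.coe_le_one_iff.mp hp)).toMeasure {b}
      = ENNReal.ofReal (cond b p (1 - p)) := by
  rw [PMF.toMeasure_apply_singleton _ _ (measurableSet_singleton b), PMF.bernoulli_apply]
  cases b
  · rw [cond_false, cond_false, ENNReal.ofReal_sub _ hp0, ENNReal.ofReal_one]; rfl
  · rfl

section ErdosRenyi

variable {p : ℝ} (hp : ENNReal.ofReal p ≤ 1)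

theorem erdosRenyi_noCommonNeighbor_le (hp0 : 0 ≤ p) (b : Bool) (u v : Fin n) :
    erdosRenyi n p hp (NoCommonNeighbor b u v)
      ≤ ENNReal.ofReal ((1 - cond b p (1 - p) ^ 2) ^ (n - 2)) := by
  have hp1 : p ≤ 1 := ENNReal.ofReal_le_one.1 hp
  have hq0 : 0 ≤ cond b p (1 - p) := by cases b <;> simp [hp0, hp1]
  have hq1 : cond b p (1 - p) ≤ 1 := by cases b <;> simp [hp0, hp1]
  calc erdosRenyi n p hp (NoCommonNeighbor b u v)
      ≤ (1 - (PMF.bernoulli p.toNNReal (ENNReal.coe_le_one_iff.mp hp)).toMeasure {b} ^ 2)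
          ^ (n - 2) :=
        measure_pi_noCommonNeighbor_le _ b u v
    _ = ENNReal.ofReal ((1 - cond b p (1 - p) ^ 2) ^ (n - 2)) := by
        rw [bernoulli_toMeasure_singleton hp0 hp, ← ENNReal.ofReal_pow hq0, ← ENNReal.ofReal_one,
          ← ENNReal.ofReal_sub _ (sq_nonneg _), ← ENNReal.ofReal_pow (by nlinarith)]

theorem erdosRenyi_le_degree_le (hp0 : 0 ≤ p) (v : Fin n) (k : ℕ) :
    erdosRenyi n p hp {σ | k ≤ (graphOf σ).degree v} ≤ ENNReal.ofReal ((1 + p) ^ n / 2 ^ k) := by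
  calc erdosRenyi n p hp {σ | k ≤ (graphOf σ).degree v}
      ≤ (1 + (PMF.bernoulli p.toNNReal (ENNReal.coe_le_one_iff.mp hp)).toMeasure {true}) ^ n
          / 2 ^ k :=
        measure_pi_le_degree_le _ v k
    _ = ENNReal.ofReal ((1 + p) ^ n / 2 ^ k) := by
        rw [bernoulli_toMeasure_singleton hp0 hp, cond_true, ← ENNReal.ofReal_one,
          ← ENNReal.ofReal_add zero_le_one hp0, ← ENNReal.ofReal_pow (by linarith),
          ENNReal.ofReal_div_of_pos (by positivity), ENNReal.ofReal_pow zero_le_two,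
          ENNReal.ofReal_ofNat]

def BadEvent (n k : ℕ) : Set (Sym2 (Fin n) → Bool) :=
  (⋃ x : Fin n × Fin n, NoCommonNeighbor true x.1 x.2) ∪
    (⋃ x : Fin n × Fin n, NoCommonNeighbor false x.1 x.2) ∪
    ⋃ v, {σ | k ≤ (graphOf σ).degree v}

theorem good_of_notMem_badEvent {σ : Sym2 (Fin n) → Bool} (hp0 : 0 ≤ p)
    (hσ : σ ∉ BadEvent n (⌊2 * n * p⌋₊ + 1)) :
    (graphOf σ).ediam ≤ 2 ∧ (graphOf σ)ᶜ.ediam ≤ 2 ∧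
      ∀ v, ((graphOf σ).degree v : ℝ) ≤ 2 * n * p := by
  simp only [BadEvent, Set.mem_union, Set.mem_iUnion, Set.mem_ofPred_eq, not_or, not_exists,
    not_le, Prod.forall, Nat.lt_succ_iff] at hσ
  exact ⟨ediam_graphOf_le_two hσ.1.1, ediam_compl_graphOf_le_two hσ.1.2,
    fun v => (Nat.le_floor_iff (by positivity)).1 (hσ.2 v)⟩

theorem erdosRenyi_badEvent_le (hp0 : 0 ≤ p) (k : ℕ) :
    erdosRenyi n p hp (BadEvent n k)
      ≤ ENNReal.ofReal ((n : ℝ) ^ 2 * (1 - p ^ 2) ^ (n - 2)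
          + (n : ℝ) ^ 2 * (1 - (1 - p) ^ 2) ^ (n - 2) + n * ((1 + p) ^ n / 2 ^ k)) := by
  have hp1 : p ≤ 1 := ENNReal.ofReal_le_one.1 hp
  have hq₁ : 0 ≤ 1 - p ^ 2 := by nlinarith
  have hq₂ : 0 ≤ 1 - (1 - p) ^ 2 := by nlinarith
  have h₁ := measure_iUnion_le_ofReal_card_mul (erdosRenyi n p hp)
    fun x : Fin n × Fin n => erdosRenyi_noCommonNeighbor_le hp hp0 true x.1 x.2
  have h₂ := measure_iUnion_le_ofReal_card_mul (erdosRenyi n p hp)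
    fun x : Fin n × Fin n => erdosRenyi_noCommonNeighbor_le hp hp0 false x.1 x.2
  have h₃ := measure_iUnion_le_ofReal_card_mul (erdosRenyi n p hp)
    fun v => erdosRenyi_le_degree_le hp hp0 v k
  simp only [Fintype.card_prod, Fintype.card_fin, ← sq, Nat.cast_pow, cond_true, cond_false]
    at h₁ h₂ h₃
  rw [ENNReal.ofReal_add (by positivity) (by positivity),
    ENNReal.ofReal_add (by positivity) (by positivity)]
  exact (measure_union_le _ _).trans
    (add_le_add ((measure_union_le _ _).trans (add_le_add h₁ h₂)) h₃)

end ErdosRenyi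

section Estimates

open Real

theorem sq_mul_one_sub_sq_pow_le {n : ℕ} {c : ℝ} (hn : 8 ≤ n) (hc : c ^ 2 ≤ 1)
    (hlog : 4 * (log n / n) ≤ c ^ 2) : (n : ℝ) ^ 2 * (1 - c ^ 2) ^ (n - 2) ≤ 1 / n := by
  have hn8 : (8 : ℝ) ≤ n := by exact_mod_cast hn
  have hn0 : (0 : ℝ) < n := by linarith
  have hcast : ((n - 2 : ℕ) : ℝ) = n - 2 := by push_cast [show 2 ≤ n by omega]; ring
  have hexp : 3 * log n ≤ (n - 2 : ℕ) * c ^ 2 := by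
    have hL : log n = log n / n * n := by field_simp
    have hL0 : 0 ≤ log n / n := div_nonneg (log_nonneg (by linarith)) hn0.le
    rw [hcast]
    nlinarith [mul_le_mul_of_nonneg_left hlog (by linarith : (0 : ℝ) ≤ n - 2),
      mul_nonneg hL0 (by linarith : (0 : ℝ) ≤ n - 8)]
  calc (n : ℝ) ^ 2 * (1 - c ^ 2) ^ (n - 2)
      ≤ (n : ℝ) ^ 2 * exp (-c ^ 2) ^ (n - 2) := by
        gcongr
        linarith [add_one_le_exp (-c ^ 2)]
    _ = exp (log n) ^ 3 * exp (-((n - 2 : ℕ) * c ^ 2)) / n := by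
        rw [exp_log hn0, ← exp_nat_mul]; field_simp
    _ ≤ 1 / n := by
        rw [← exp_nat_mul, ← exp_add]
        gcongr
        exact exp_le_one_iff.2 (by push_cast; linarith)

theorem mul_one_add_pow_div_two_pow_le {n k : ℕ} {p : ℝ} (hp : 0 ≤ p)
    (hnp : 2 * √n ≤ n * p) (hk : 2 * n * p ≤ k) : n * ((1 + p) ^ n / 2 ^ k) ≤ 384 / n := by
  rcases n.eq_zero_or_pos with rfl | hn
  · simp
  have hn0 : (0 : ℝ) < n := by exact_mod_cast hn
  have hratio : (1 + p) ^ n / 2 ^ k ≤ exp (-(√n / 2)) := by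
    have h2k : exp (2 * n * p * log 2) ≤ 2 ^ k := by
      rw [← rpow_natCast, rpow_def_of_pos two_pos, mul_comm (log 2)]
      gcongr
    rw [div_le_iff₀ (by positivity)]
    calc (1 + p) ^ n ≤ exp p ^ n := by gcongr; linarith [add_one_le_exp p]
      _ ≤ exp (-(√n / 2)) * exp (2 * n * p * log 2) := by
        rw [← exp_nat_mul, ← exp_add, exp_le_exp]
        nlinarith [mul_le_mul_of_nonneg_left log_two_gt_d9.le (by positivity : (0 : ℝ) ≤ n * p)]
      _ ≤ exp (-(√n / 2)) * 2 ^ k := by gcongr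
  have hpoly : (n : ℝ) ^ 2 ≤ 384 * exp (√n / 2) := by
    have h := pow_div_factorial_le_exp (x := √n / 2) (by positivity) 4
    rw [div_pow, show √n ^ 4 = (√n ^ 2) ^ 2 by ring, sq_sqrt hn0.le] at h
    norm_num [Nat.factorial] at h
    linarith
  calc (n : ℝ) * ((1 + p) ^ n / 2 ^ k) ≤ n * exp (-(√n / 2)) := by gcongr
    _ ≤ 384 / n := by
      rw [exp_neg, ← div_eq_mul_inv, div_le_div_iff₀ (exp_pos _) hn0]
      nlinarith

theorem tail_sum_le {n k : ℕ} {p : ℝ} (hn : 8 ≤ n) (hp₁ : 2 * √(log n / n) ≤ p)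
    (hp₂ : p ≤ 1 - 2 * √(log n / n)) (hk : 2 * n * p ≤ k) :
    (n : ℝ) ^ 2 * (1 - p ^ 2) ^ (n - 2) + (n : ℝ) ^ 2 * (1 - (1 - p) ^ 2) ^ (n - 2)
      + n * ((1 + p) ^ n / 2 ^ k) ≤ 386 / n := by
  have hn8 : (8 : ℝ) ≤ n := by exact_mod_cast hn
  have hn0 : (0 : ℝ) < n := by linarith
  have hlog : 1 ≤ log n := by
    rw [le_log_iff_exp_le hn0]; linarith [exp_one_lt_d9]
  have hL0 : 0 ≤ log n / n := by positivity
  have hsq : ∀ c, 2 * √(log n / n) ≤ c → 4 * (log n / n) ≤ c ^ 2 := fun c hc => by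
    nlinarith [sq_sqrt hL0, sqrt_nonneg (log n / n)]
  have hp0 : 0 ≤ p := (by positivity : (0 : ℝ) ≤ 2 * √(log n / n)).trans hp₁
  have hnp : 2 * √n ≤ n * p := by
    have h4 : 4 * n ≤ (n * p) ^ 2 := by
      have := hsq p hp₁
      rw [mul_div_assoc', div_le_iff₀ hn0] at this
      nlinarith
    refine le_of_pow_le_pow_left₀ two_ne_zero (by positivity) ?_
    rwa [mul_pow, sq_sqrt hn0.le, show (2 : ℝ) ^ 2 = 4 by norm_num]
  have hpair₁ := sq_mul_one_sub_sq_pow_le hn (by nlinarith [sqrt_nonneg (log n / n)]) (hsq p hp₁)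
  have hpair₂ := sq_mul_one_sub_sq_pow_le hn (by nlinarith [sqrt_nonneg (log n / n)])
    (hsq (1 - p) (by linarith))
  have hdeg := mul_one_add_pow_div_two_pow_le hp0 hnp hk
  linarith [show (1 : ℝ) / n + 1 / n + 384 / n = 386 / n by ring]

end Estimates

theorem erdosRenyi_diam_two_and_degrees_aas :
    ∀ ε : ℝ, 0 < ε → ∃ N : ℕ, ∀ n : ℕ, N ≤ n → ∀ p : ℝ,
      2 * Real.sqrt (Real.log n / n) ≤ p →
      p ≤ 1 - 2 * Real.sqrt (Real.log n / n) →
      ∀ hp : ENNReal.ofReal p ≤ 1,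
      erdosRenyi n p hp
          {σ | (graphOf σ).ediam ≤ 2 ∧ (graphOf σ)ᶜ.ediam ≤ 2 ∧
            ∀ v, ((graphOf σ).degree v : ℝ) ≤ 2 * n * p}
        ≥ 1 - ENNReal.ofReal ε := by
  intro ε hε
  obtain ⟨N, hN8, hNε⟩ : ∃ N : ℕ, 8 ≤ N ∧ 386 / ε ≤ N :=
    ⟨max 8 ⌈386 / ε⌉₊, le_max_left _ _, (Nat.le_ceil _).trans (by exact_mod_cast le_max_right _ _)⟩
  refine ⟨N, fun n hn p hp₁ hp₂ hp => ?_⟩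
  have hp0 : 0 ≤ p := (by positivity : (0 : ℝ) ≤ 2 * √(Real.log n / n)).trans hp₁
  have hε' : 386 / (n : ℝ) ≤ ε :=
    (div_le_comm₀ (by exact_mod_cast (by omega : 0 < n)) hε).2 (hNε.trans (by exact_mod_cast hn))
  set k := ⌊2 * n * p⌋₊ + 1
  calc erdosRenyi n p hp {σ | (graphOf σ).ediam ≤ 2 ∧ (graphOf σ)ᶜ.ediam ≤ 2 ∧
          ∀ v, ((graphOf σ).degree v : ℝ) ≤ 2 * n * p}
      ≥ erdosRenyi n p hp (BadEvent n k)ᶜ := measure_mono fun σ => good_of_notMem_badEvent hp0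
    _ = 1 - erdosRenyi n p hp (BadEvent n k) := prob_compl_eq_one_sub .of_discrete
    _ ≥ 1 - ENNReal.ofReal ε := by
        gcongr
        refine (erdosRenyi_badEvent_le hp hp0 k).trans (ENNReal.ofReal_le_ofReal ?_)
        have hk : 2 * n * p ≤ k := by push_cast [k]; exact (Nat.lt_floor_add_one _).le
        exact (tail_sum_le (hN8.trans hn) hp₁ hp₂ hk).trans hε'
end

section
/- There exists an infinite family of diameter-2-critical graphs G on n vertices with m edges satisfying ∑_v d_v² ≥ (10/9 − o(1))·n·m, where o(1) → 0 as n → ∞. In particular, the conjecture that every diameter-2-critical graph satisfies ∑_v d_v² ≤ n·m is false. -/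
/-!
Take a clique `S = {x₁, …, xₛ}`, an independent set `B` of size `s` joined completely to `S`,
a pendant vertex `yₐ` at each `xₐ`, a vertex `y*` adjacent to all of `B`, and a hub `h`
adjacent to `y*` and to every `yₐ`. Any two vertices are adjacent or have a common neighbour,
and deleting any edge leaves a pair at distance `3`: for `xₐxᵦ` the pair `xₐ, yᵦ`; for `xₐb`
the pair `b, yₐ`; for `xₐyₐ`, `yₐh` and `y*h` the ends of the edge; for `by*` the pair `b, h`.
Here `n = 3s + 2`, `2m = (3s + 2)(s + 1)` and `∑ d_v² = 5s³ + 4s² + 9s + 2`, so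
`∑ d_v² / (n m) → 10/9`; already `s = 13` gives `∑ d_v² = 11780 > 11767 = n m`.
-/

open scoped Classical

/-- A graph is diameter-2-critical if it has diameter 2 and deleting any edge strictly
increases the diameter. -/
def IsDiamTwoCritical {V : Type*} (G : SimpleGraph V) : Prop :=
  G.ediam = 2 ∧ ∀ e ∈ G.edgeSet, 2 < (G.deleteEdges {e}).ediam

namespace SimpleGraph

variable {V : Type*} {G : SimpleGraph V}

lemma edist_le_two_iff {u v : V} :
    G.edist u v ≤ 2 ↔ u = v ∨ G.Adj u v ∨ ∃ w, G.Adj u w ∧ G.Adj w v := by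
  rw [← not_lt, two_lt_edist_iff, Set.eq_empty_iff_forall_notMem]
  simp only [mem_commonNeighbors, G.adj_comm v]
  grind

lemma two_le_ediam_of_not_adj {u v : V} (huv : u ≠ v) (hadj : ¬ G.Adj u v) : 2 ≤ G.ediam := by
  have h : 1 < G.edist u v := by
    rw [← not_le, edist_le_one_iff_adj_or_eq]
    tauto
  exact (Order.add_one_le_of_lt h).trans edist_le_ediam

lemma two_lt_ediam_iff :
    2 < G.ediam ↔ ∃ u v, u ≠ v ∧ ¬ G.Adj u v ∧ ∀ w, ¬ (G.Adj u w ∧ G.Adj w v) := by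
  simp only [ediam_def, lt_iSup_iff, two_lt_edist_iff, Set.eq_empty_iff_forall_notMem,
    mem_commonNeighbors, Prod.exists, G.adj_comm _ (_ : V)]

end SimpleGraph

namespace CaccettaHaggkvist

open SimpleGraph Finset

/-- Vertex labels: `a < s` is `xₐ`, `s ≤ a < 2s` is in `B`, `2s + a` is `yₐ`, `3s` is `y*` and
`3s + 1` is `h`. Each edge is listed once, from its smaller label. -/
def Edge (s a b : ℕ) : Prop :=
  (a < s ∧ a < b ∧ b < 2 * s) ∨
  (a < s ∧ b = 2 * s + a) ∨
  (s ≤ a ∧ a < 2 * s ∧ b = 3 * s) ∨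
  (2 * s ≤ a ∧ a ≤ 3 * s ∧ b = 3 * s + 1)

def Adj (s a b : ℕ) : Prop := Edge s a b ∨ Edge s b a

def graph (s : ℕ) : SimpleGraph (Fin (3 * s + 2)) where
  Adj u v := Adj s u v
  symm := ⟨fun _ _ => Or.symm⟩
  loopless := ⟨fun _ h => by simp only [Adj, Edge] at h; omega⟩

lemma graph_adj {s : ℕ} {u v : Fin (3 * s + 2)} : (graph s).Adj u v ↔ Adj s u v := Iff.rfl

lemma adj_or_exists_adj_adj {s a b : ℕ} (hb : b < 3 * s + 2) (hab : a < b) :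
    Adj s a b ∨ ∃ c < 3 * s + 2, Adj s a c ∧ Adj s c b := by
  simp only [Adj, Edge]
  by_cases hbB : b < 2 * s
  · by_cases haS : a < s
    · omega
    · exact .inr ⟨0, by omega, by omega, by omega⟩
  by_cases hbY : b < 3 * s
  · by_cases haSB : a < 2 * s
    · by_cases hpend : b = 2 * s + a
      · omega
      · exact .inr ⟨b - 2 * s, by omega, by omega, by omega⟩
    · exact .inr ⟨3 * s + 1, by omega, by omega, by omega⟩
  by_cases haS : a < s
  · by_cases hb : b = 3 * s
    · exact .inr ⟨s, by omega, by omega, by omega⟩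
    · exact .inr ⟨2 * s + a, by omega, by omega, by omega⟩
  by_cases haB : a < 2 * s
  · by_cases hb : b = 3 * s
    · omega
    · exact .inr ⟨3 * s, by omega, by omega, by omega⟩
  · by_cases hb : b = 3 * s
    · exact .inr ⟨3 * s + 1, by omega, by omega, by omega⟩
    · omega

lemma ediam_graph {s : ℕ} (hs : 1 ≤ s) : (graph s).ediam = 2 := by
  refine le_antisymm (ediam_le_iff.mpr fun u v => edist_le_two_iff.mpr ?_) ?_
  · rcases lt_trichotomy u.val v.val with h | h | h
    · obtain h | ⟨c, hc, huc, hcv⟩ := adj_or_exists_adj_adj v.isLt h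
      exacts [.inr (.inl h), .inr (.inr ⟨⟨c, hc⟩, huc, hcv⟩)]
    · exact .inl (Fin.ext h)
    · obtain h | ⟨c, hc, hvc, hcu⟩ := adj_or_exists_adj_adj u.isLt h
      exacts [.inr (.inl (Or.symm h)), .inr (.inr ⟨⟨c, hc⟩, Or.symm hcu, Or.symm hvc⟩)]
  · refine two_le_ediam_of_not_adj (u := ⟨s, by omega⟩) (v := ⟨3 * s + 1, by omega⟩) ?_ ?_
    · simp only [ne_eq, Fin.ext_iff]; omega
    · simp only [graph_adj, Adj, Edge]; omega

lemma deleteEdges_graph_adj {s : ℕ} {u v x y : Fin (3 * s + 2)} :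
    ((graph s).deleteEdges {s(u, v)}).Adj x y ↔
      Adj s x y ∧ ¬ ((x.val = u ∧ y.val = v) ∨ (x.val = v ∧ y.val = u)) := by
  simp only [deleteEdges_adj, graph_adj, Set.mem_singleton_iff, Sym2.eq_iff, Fin.ext_iff]

lemma two_lt_ediam_deleteEdges_of_edge {s : ℕ} {u v : Fin (3 * s + 2)} (h : Edge s u v) :
    2 < ((graph s).deleteEdges {s(u, v)}).ediam := by
  rw [two_lt_ediam_iff]
  simp only [ne_eq, Fin.ext_iff, deleteEdges_graph_adj, Adj, Edge]
  simp only [Edge] at h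
  rcases h with ⟨hu, huv, hv⟩ | ⟨hu, hv⟩ | ⟨hu, hu', hv⟩ | ⟨hu, hu', hv⟩
  · by_cases hvS : v < s
    · refine ⟨u, ⟨2 * s + v, by omega⟩, ?_, ?_, fun w => ?_⟩ <;> dsimp only <;> omega
    · refine ⟨v, ⟨2 * s + u, by omega⟩, ?_, ?_, fun w => ?_⟩ <;> dsimp only <;> omega
  · exact ⟨u, v, by omega, by omega, fun w => by omega⟩
  · refine ⟨u, ⟨3 * s + 1, by omega⟩, ?_, ?_, fun w => ?_⟩ <;> dsimp only <;> omega
  · exact ⟨u, v, by omega, by omega, fun w => by omega⟩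

lemma forall_two_lt_ediam_deleteEdges (s : ℕ) :
    ∀ e ∈ (graph s).edgeSet, 2 < ((graph s).deleteEdges {e}).ediam := by
  intro e
  induction e using Sym2.ind with
  | _ u v =>
    rintro (h | h)
    · exact two_lt_ediam_deleteEdges_of_edge h
    · rw [Sym2.eq_swap]
      exact two_lt_ediam_deleteEdges_of_edge h

lemma isDiamTwoCritical_graph {s : ℕ} (hs : 1 ≤ s) : IsDiamTwoCritical (graph s) :=
  ⟨ediam_graph hs, forall_two_lt_ediam_deleteEdges s⟩

def degreeOf (s i : ℕ) : ℕ :=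
  if i < s then 2 * s else if i < 2 * s then s + 1 else if i < 3 * s then 2 else s + 1

lemma card_filter_adj (s : ℕ) {a : ℕ} (ha : a < 3 * s + 2) :
    #{i ∈ range (3 * s + 2) | Adj s a i} = degreeOf s a := by
  have card_eq : ∀ T : Finset ℕ, (∀ i, i < 3 * s + 2 ∧ Adj s a i ↔ i ∈ T) →
      #{i ∈ range (3 * s + 2) | Adj s a i} = #T := fun T hT => by
    congr 1; ext i; rw [mem_filter, mem_range, hT]
  unfold degreeOf
  split_ifs with hS hB hY
  · rw [card_eq (insert (2 * s + a) ((range (2 * s)).erase a))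
      (fun i => by simp only [mem_insert, mem_erase, mem_range, Adj, Edge]; omega),
      card_insert_of_notMem (by simp only [mem_erase, mem_range]; omega),
      card_erase_of_mem (by simp only [mem_range]; omega), card_range]
    omega
  · rw [card_eq (insert (3 * s) (range s))
      (fun i => by simp only [mem_insert, mem_range, Adj, Edge]; omega),
      card_insert_of_notMem (by simp only [mem_range]; omega), card_range]
  · rw [card_eq {a - 2 * s, 3 * s + 1}
      (fun i => by simp only [mem_insert, mem_singleton, Adj, Edge]; omega),
      card_pair (by omega)]
  · by_cases hy : a = 3 * s
    · rw [card_eq (insert (3 * s + 1) (Ico s (2 * s)))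
        (fun i => by simp only [mem_insert, mem_Ico, Adj, Edge]; omega),
        card_insert_of_notMem (by simp only [mem_Ico]; omega), Nat.card_Ico]
      omega
    · rw [card_eq (Ico (2 * s) (3 * s + 1)) (fun i => by simp only [mem_Ico, Adj, Edge]; omega),
        Nat.card_Ico]
      omega

lemma degree_graph (s : ℕ) (v : Fin (3 * s + 2)) : (graph s).degree v = degreeOf s v := by
  rw [← card_filter_adj s v.isLt, ← card_neighborFinset_eq_degree, neighborFinset_eq_filter,
    card_filter, card_filter, ← Fin.sum_univ_eq_sum_range (fun i => if Adj s v i then 1 else 0)]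
  rfl

lemma sum_degreeOf {M : Type*} [AddCommMonoid M] (s : ℕ) (f : ℕ → M) :
    ∑ i ∈ range (3 * s + 2), f (degreeOf s i) =
      s • f (2 * s) + (s + 2) • f (s + 1) + s • f 2 := by
  have block : ∀ a b d, (∀ i, a ≤ i → i < b → degreeOf s i = d) →
      ∑ i ∈ Ico a b, f (degreeOf s i) = (b - a) • f d := fun a b d h => by
    rw [sum_eq_card_nsmul (fun i hi => by rw [mem_Ico] at hi; rw [h i hi.1 hi.2]), Nat.card_Ico]
  rw [sum_range_succ, sum_range_succ, range_eq_Ico,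
    ← sum_Ico_consecutive _ (Nat.zero_le (2 * s)) (by omega : 2 * s ≤ 3 * s),
    ← sum_Ico_consecutive _ (Nat.zero_le s) (by omega : s ≤ 2 * s),
    block 0 s (2 * s) (fun i _ hi => if_pos hi),
    block s (2 * s) (s + 1) (fun i hi hi' => by simp only [degreeOf]; split_ifs <;> omega),
    block (2 * s) (3 * s) 2 (fun i hi hi' => by simp only [degreeOf]; split_ifs <;> omega)]
  have h3s : degreeOf s (3 * s) = s + 1 := by simp only [degreeOf]; split_ifs <;> omega
  have h3s1 : degreeOf s (3 * s + 1) = s + 1 := by simp only [degreeOf]; split_ifs <;> omega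
  rw [h3s, h3s1, Nat.sub_zero, show 2 * s - s = s by omega, show 3 * s - 2 * s = s by omega,
    add_nsmul]
  abel

lemma sum_degree_graph {M : Type*} [AddCommMonoid M] (s : ℕ) (f : ℕ → M) :
    ∑ v, f ((graph s).degree v) = s • f (2 * s) + (s + 2) • f (s + 1) + s • f 2 := by
  simp only [degree_graph]
  exact (Fin.sum_univ_eq_sum_range (fun i => f (degreeOf s i)) _).trans (sum_degreeOf s f)

lemma two_mul_card_edgeFinset_graph (s : ℕ) :
    2 * #(graph s).edgeFinset = (3 * s + 2) * (s + 1) := by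
  have h := sum_degree_graph s id
  simp only [id, smul_eq_mul] at h
  rw [← sum_degrees_eq_twice_card_edges, h]
  ring

lemma sum_sq_degree_graph (s : ℕ) :
    ∑ v, ((graph s).degree v : ℝ) ^ 2 = 5 * s ^ 3 + 4 * s ^ 2 + 9 * s + 2 := by
  rw [sum_degree_graph s (fun d => (d : ℝ) ^ 2), nsmul_eq_mul, nsmul_eq_mul, nsmul_eq_mul]
  push_cast
  ring

lemma sub_mul_card_edgeFinset_le_sum_sq_degree_graph {s : ℕ} {ε : ℝ} (hε : 0 < ε)
    (hεs : 2 ≤ ε * s) :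
    (10 / 9 - ε) * (3 * s + 2) * #(graph s).edgeFinset ≤
      ∑ v, ((graph s).degree v : ℝ) ^ 2 := by
  have hm : (#(graph s).edgeFinset : ℝ) = (3 * s + 2) * (s + 1) / 2 := by
    rw [eq_div_iff two_ne_zero, mul_comm]
    exact_mod_cast two_mul_card_edgeFinset_graph s
  rw [hm, sum_sq_degree_graph]
  have hs : (0 : ℝ) ≤ s := s.cast_nonneg
  -- `(10/9) n m - ∑ d² = (23/3)s² - s/9 + 2/9`, while `ε n m ≥ (ε s)(9s² + 21s + 16)/2`
  nlinarith [mul_nonneg (sub_nonneg.mpr hεs)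
    (by positivity : (0 : ℝ) ≤ 9 * s ^ 2 + 21 * s + 16)]

end CaccettaHaggkvist

theorem caccetta_haggkvist_diam_two_false :
    (∀ ε : ℝ, 0 < ε → ∀ N : ℕ, ∃ n : ℕ, N ≤ n ∧ ∃ G : SimpleGraph (Fin n),
      IsDiamTwoCritical G ∧
        (10 / 9 - ε) * n * G.edgeFinset.card ≤ ∑ v : Fin n, ((G.degree v : ℝ) ^ 2)) ∧
    ¬ (∀ (n : ℕ) (G : SimpleGraph (Fin n)), IsDiamTwoCritical G →
        ∑ v : Fin n, ((G.degree v : ℝ) ^ 2) ≤ n * G.edgeFinset.card) := by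
  open CaccettaHaggkvist in
  refine ⟨fun ε hε N => ?_, fun h => ?_⟩
  · set s := N + ⌈2 / ε⌉₊ + 1
    have hεs : 2 ≤ ε * s := by
      rw [← div_le_iff₀' hε]
      exact (Nat.le_ceil _).trans (by norm_cast; omega)
    refine ⟨3 * s + 2, by omega, graph s, isDiamTwoCritical_graph (by omega), ?_⟩
    push_cast
    exact sub_mul_card_edgeFinset_le_sum_sq_degree_graph hε hεs
  · have h13 := h _ (graph 13) (isDiamTwoCritical_graph (by norm_num))
    have hm : (graph 13).edgeFinset.card = 287 := by
      have := two_mul_card_edgeFinset_graph 13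
      omega
    rw [sum_sq_degree_graph, hm] at h13
    norm_num at h13
end

section
/- Let G be a diameter-critical graph of diameter k ≥ 3 with n vertices and m edges. Then ∑_v d_v² ≤ n·m; equivalently, the average edge-degree of G is at most n. -/
/-!
Counting the vertices `z` according to their adjacency to the ends of an edge `ab` gives
`d a + d b + #{z | z ≁ a, z ≁ b} = n + #{z | z ∼ a, z ∼ b}`. Summed over ordered edges this is
`2 ∑ d_v² + F = 2nm + T`, where `T` counts triangles `(a, b; w)` and `F` counts "far" triples
`(a, b; z)` with `ab` an edge and `z` adjacent to neither `a` nor `b`; so it suffices that `T ≤ F`.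

Let `ab` be an edge with apex `w`. Criticality gives `x, y` such that every `x`–`y` walk of length
at most `k` uses `ab`; a detour through `w` shows that a geodesic `x … a b … y` has at least two
more edges besides `ab`. The vertices one or two steps beyond an end `c` of `ab` on it are gates:
vertices `z` with `dist c z ≥ 2` all of whose geodesics from `c` leave along `ab`. So `ab` has
two distinct gates `(c, z)`, and each gives a far triple `(c, w; z)`. Conversely a gate `(c, z)`
determines the edge, since the `c`–`z` geodesics share their first edge. Hence
`(a, b; w) ↦ (c, w; z)` relates each triangle to at least two far triples and each far triple to
at most two triangles.
-/

open scoped Classical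

open Finset

namespace SimpleGraph

variable {V : Type*} {G : SimpleGraph V}

lemma Walk.exists_eq_append_cons_of_mem_edges {x y : V} {e : Sym2 V} {p : G.Walk x y}
    (he : e ∈ p.edges) :
    ∃ (a b : V) (p₁ : G.Walk x a) (h : G.Adj a b) (p₂ : G.Walk b y),
      s(a, b) = e ∧ p = p₁.append (cons h p₂) := by
  induction p with
  | nil => simp at he
  | @cons x w y h q ih =>
    by_cases hxw : s(x, w) = e
    · exact ⟨x, w, nil, h, q, hxw, rfl⟩
    · obtain ⟨a, b, p₁, hab, p₂, hab_e, rfl⟩ := ih (by simpa [Ne.symm hxw] using he)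
      exact ⟨a, b, cons h p₁, hab, p₂, hab_e, rfl⟩

lemma Walk.IsPath.notMem_edges_of_append_cons {x y u v : V} {p : G.Walk x u} {h : G.Adj u v}
    {q : G.Walk v y} (hpath : (p.append (cons h q)).IsPath) :
    s(u, v) ∉ p.edges ∧ s(u, v) ∉ q.edges := by
  have := hpath.edges_nodup
  simp only [Walk.edges_append, Walk.edges_cons, List.nodup_append, List.nodup_cons] at this
  exact ⟨fun he => this.2.2 _ he _ (List.mem_cons_self ..) rfl, this.2.1.1⟩

variable (G) in
def OnAllGeodesics (e : Sym2 V) (x y : V) : Prop :=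
  ∀ W : G.Walk x y, W.length = G.dist x y → e ∈ W.edges

lemma OnAllGeodesics.symm {e : Sym2 V} {x y : V} (h : G.OnAllGeodesics e x y) :
    G.OnAllGeodesics e y x := fun W hW => by
  simpa using h W.reverse (by rw [Walk.length_reverse, hW, dist_comm])

variable (G) in
/-- Geodesics are paths, so every geodesic from `c` to `z` starts with the edge `cu`. -/
def IsGate (c u z : V) : Prop :=
  2 ≤ G.dist c z ∧ G.OnAllGeodesics s(c, u) c z

namespace IsGate

variable {c u z : V}

lemma ne (h : G.IsGate c u z) : c ≠ z := by
  rintro rfl; simpa using h.1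

lemma not_adj (h : G.IsGate c u z) : ¬ G.Adj c z := by
  rw [← dist_eq_one_iff_adj]; have := h.1; omega

lemma unique {u' : V} (h : G.IsGate c u z) (h' : G.IsGate c u' z) : u = u' := by
  obtain ⟨p, hp, hlen⟩ :=
    (Reachable.of_dist_ne_zero (by have := h.1; omega : G.dist c z ≠ 0)).exists_path_of_dist
  rw [hp.eq_snd_of_mem_edges (h.2 p hlen), hp.eq_snd_of_mem_edges (h'.2 p hlen)]

lemma not_adj_of_adj {w : V} (h : G.IsGate c u z) (hcw : G.Adj c w) (huw : G.Adj u w) :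
    ¬ G.Adj w z := by
  intro hwz
  let p : G.Walk c z := .cons hcw (.cons hwz .nil)
  have hp : p.length = G.dist c z := by
    have := dist_le p; have := h.1; simp only [p, Walk.length_cons, Walk.length_nil] at *; omega
  have hmem := h.2 p hp
  simp only [p, Walk.edges_cons, Walk.edges_nil, List.mem_cons, Sym2.eq_iff, List.not_mem_nil,
    or_false, true_and] at hmem
  exact hmem.elim (·.elim huw.ne (hcw.ne ·.1)) (·.elim (hcw.ne ·.1) (h.ne ·.1))

end IsGate

variable (G) in
def IsEdgeGate (e : Sym2 V) (c z : V) : Prop :=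
  ∃ u, e = s(c, u) ∧ G.IsGate c u z

lemma IsEdgeGate.unique {e e' : Sym2 V} {c z : V} (h : G.IsEdgeGate e c z)
    (h' : G.IsEdgeGate e' c z) : e = e' := by
  obtain ⟨u, rfl, hu⟩ := h
  obtain ⟨u', rfl, hu'⟩ := h'
  rw [hu.unique hu']

lemma isGate_of_geodesic_append {x y c u z : V} (hcut : G.OnAllGeodesics s(c, u) x y)
    (p : G.Walk x c) (q : G.Walk c z) (r : G.Walk z y)
    (hgeo : (p.append (q.append r)).length = G.dist x y)
    (hp : s(c, u) ∉ p.edges) (hr : s(c, u) ∉ r.edges) (hq : 2 ≤ q.length) :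
    G.IsGate c u z ∧ G.dist c z = q.length := by
  have hqd : q.length = G.dist c z :=
    length_eq_dist_of_subwalk hgeo ⟨p, r, Walk.append_assoc _ _ _⟩
  refine ⟨⟨hqd ▸ hq, fun q' hq' => ?_⟩, hqd.symm⟩
  have hW := hcut (p.append (q'.append r)) (by simp only [Walk.length_append] at hgeo ⊢; omega)
  simpa [Walk.edges_append, hp, hr] using hW

section Geodesic

variable {x y u v : V} (p : G.Walk x u) (h : G.Adj u v) (q : G.Walk v y)

lemma isGate_getVert_right (hgeo : (p.append (Walk.cons h q)).length = G.dist x y)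
    (hcut : G.OnAllGeodesics s(u, v) x y) {i : ℕ} (hi : 1 ≤ i) (hiq : i ≤ q.length) :
    G.IsGate u v (q.getVert i) ∧ G.dist u (q.getVert i) = i + 1 := by
  have ⟨hp, hq⟩ := (Walk.isPath_of_length_eq_dist _ hgeo).notMem_edges_of_append_cons
  have := isGate_of_geodesic_append hcut p (.cons h (q.take i)) (q.drop i)
    (by rw [← hgeo]; simp) hp
    (fun he => hq (by rw [Walk.edges_drop] at he; exact List.mem_of_mem_drop he))
    (by simp only [Walk.length_cons, Walk.take_length]; omega)
  simpa [Walk.take_length, hiq] using this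

lemma isGate_getVert_left (hgeo : (p.append (Walk.cons h q)).length = G.dist x y)
    (hcut : G.OnAllGeodesics s(u, v) x y) {i : ℕ} (hi : 1 ≤ i) (hip : i ≤ p.length) :
    G.IsGate v u (p.reverse.getVert i) ∧ G.dist v (p.reverse.getVert i) = i + 1 := by
  refine isGate_getVert_right q.reverse h.symm p.reverse ?_ ?_ hi (by simpa using hip)
  · rw [dist_comm, ← hgeo]
    simp only [Walk.length_append, Walk.length_reverse, Walk.length_cons]; omega
  · rw [Sym2.eq_swap]; exact hcut.symm

lemma exists_two_isEdgeGate (hgeo : (p.append (Walk.cons h q)).length = G.dist x y)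
    (hcut : G.OnAllGeodesics s(u, v) x y) (hlen : 2 ≤ p.length + q.length) :
    ∃ g₁ g₂ : V × V, g₁ ≠ g₂ ∧
      G.IsEdgeGate s(u, v) g₁.1 g₁.2 ∧ G.IsEdgeGate s(u, v) g₂.1 g₂.2 := by
  rcases Nat.eq_zero_or_pos p.length with hp | hp
  · have h₁ := isGate_getVert_right p h q hgeo hcut le_rfl (by omega)
    have h₂ := isGate_getVert_right p h q hgeo hcut one_le_two (by omega)
    refine ⟨(u, q.getVert 1), (u, q.getVert 2), fun he => ?_, ⟨v, rfl, h₁.1⟩, ⟨v, rfl, h₂.1⟩⟩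
    have := congrArg (G.dist u ·.2) he
    simp only [h₁.2, h₂.2] at this
    omega
  rcases Nat.eq_zero_or_pos q.length with hq | hq
  · have h₁ := isGate_getVert_left p h q hgeo hcut le_rfl (by omega)
    have h₂ := isGate_getVert_left p h q hgeo hcut one_le_two (by omega)
    refine ⟨(v, p.reverse.getVert 1), (v, p.reverse.getVert 2), fun he => ?_,
      ⟨u, Sym2.eq_swap, h₁.1⟩, ⟨u, Sym2.eq_swap, h₂.1⟩⟩
    have := congrArg (G.dist v ·.2) he
    simp only [h₁.2, h₂.2] at this
    omega
  · exact ⟨(u, q.getVert 1), (v, p.reverse.getVert 1), fun he => h.ne congr($he.1),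
      ⟨v, rfl, (isGate_getVert_right p h q hgeo hcut le_rfl hq).1⟩,
      ⟨u, Sym2.eq_swap, (isGate_getVert_left p h q hgeo hcut le_rfl hp).1⟩⟩

end Geodesic

lemma mem_edges_of_lt_edist_deleteEdges {e : Sym2 V} {x y : V} {n : ℕ}
    (h : n < (G.deleteEdges {e}).edist x y) (W : G.Walk x y) (hW : W.length ≤ n) :
    e ∈ W.edges := by
  by_contra he
  have := (W.toDeleteEdge e he).edist_le
  rw [Walk.length_transfer] at this
  exact (this.trans (by exact_mod_cast hW)).not_gt h

lemma exists_two_isEdgeGate_of_lt_ediam_deleteEdges {k : ℕ} {u v w : V} (hk : 3 ≤ k)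
    (hdiam : G.ediam = k) (hcrit : G.ediam < (G.deleteEdges {s(u, v)}).ediam)
    (huw : G.Adj u w) (hvw : G.Adj v w) :
    ∃ g₁ g₂ : V × V, g₁ ≠ g₂ ∧
      G.IsEdgeGate s(u, v) g₁.1 g₁.2 ∧ G.IsEdgeGate s(u, v) g₂.1 g₂.2 := by
  rw [hdiam, ediam_def, lt_iSup_iff] at hcrit
  obtain ⟨⟨x, y⟩, hxy⟩ := hcrit
  have hshort := mem_edges_of_lt_edist_deleteEdges hxy
  have hxy_le : G.edist x y ≤ k := hdiam ▸ edist_le_ediam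
  have hreach : G.Reachable x y :=
    reachable_of_edist_ne_top (ne_top_of_le_ne_top (by simp) hxy_le)
  obtain ⟨P, hP⟩ := hreach.exists_walk_length_eq_dist
  have hPk : P.length ≤ k := by
    rw [hP]; exact_mod_cast hreach.coe_dist_eq_edist ▸ hxy_le
  have hcut : G.OnAllGeodesics s(u, v) x y := fun W hW => hshort W (hW.trans hP.symm ▸ hPk)
  obtain ⟨a, b, p, hab, q, he, rfl⟩ := P.exists_eq_append_cons_of_mem_edges (hcut _ hP)
  have haw : G.Adj a w ∧ G.Adj b w := by
    rcases Sym2.eq_iff.mp he with ⟨rfl, rfl⟩ | ⟨rfl, rfl⟩ <;> exact ⟨‹_›, ‹_›⟩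
  rw [← he] at hcut hshort ⊢
  refine exists_two_isEdgeGate p hab q hP hcut ?_
  have ⟨hp, hq⟩ := (Walk.isPath_of_length_eq_dist _ hP).notMem_edges_of_append_cons
  by_contra hlen
  -- the detour through `w` avoids `s(a, b)` and is not longer than `k`
  have hmem := hshort (p.append (.cons haw.1 (.cons haw.2.symm q)))
    (by simp only [Walk.length_append, Walk.length_cons] at hPk ⊢; omega)
  simp only [Walk.edges_append, Walk.edges_cons, List.mem_append, hp, List.mem_cons, Sym2.eq,
    Sym2.rel_iff', Prod.mk.injEq, true_and, Prod.swap_prod_mk, and_true, hq, or_false,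
    false_or] at hmem
  exact hmem.elim (·.elim haw.2.ne (haw.1.ne ·.1)) (·.elim haw.1.ne (hab.ne ·.1))

section Counting

variable [Fintype V]

variable (G) in
noncomputable def triangleTriples : Finset ((V × V) × V) :=
  {t | G.Adj t.1.1 t.1.2 ∧ G.Adj t.1.1 t.2 ∧ G.Adj t.1.2 t.2}

variable (G) in
noncomputable def farTriples : Finset ((V × V) × V) :=
  {t | G.Adj t.1.1 t.1.2 ∧ ¬ G.Adj t.1.1 t.2 ∧ ¬ G.Adj t.1.2 t.2}

lemma card_filter_adj_adj_fst :
    #{t : (V × V) × V | G.Adj t.1.1 t.1.2 ∧ G.Adj t.1.1 t.2} = ∑ v, G.degree v ^ 2 := by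
  have hdeg (a : V) : ∑ b, (if G.Adj a b then 1 else 0) = G.degree a := by
    rw [← card_filter, ← neighborFinset_eq_filter, card_neighborFinset_eq_degree]
  have hmul (a b z : V) : (if G.Adj a b ∧ G.Adj a z then 1 else 0) =
      (if G.Adj a b then 1 else 0) * (if G.Adj a z then 1 else 0) := by
    rw [ite_zero_mul_ite_zero, mul_one]
  rw [card_filter, Fintype.sum_prod_type, Fintype.sum_prod_type]
  simp only [hmul, ← Finset.sum_mul_sum, hdeg, sq]

lemma card_filter_adj_adj_snd :
    #{t : (V × V) × V | G.Adj t.1.1 t.1.2 ∧ G.Adj t.1.2 t.2} = ∑ v, G.degree v ^ 2 := by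
  rw [← card_filter_adj_adj_fst]
  exact card_equiv ((Equiv.prodComm V V).prodCongr (Equiv.refl V)) (by simp [adj_comm])

lemma card_filter_adj :
    #{t : (V × V) × V | G.Adj t.1.1 t.1.2} = 2 * #G.edgeFinset * Fintype.card V := by
  rw [two_mul_card_edgeFinset, ← card_univ (α := V), ← card_product]
  congr 1; ext; simp

theorem two_mul_sum_degree_sq_add_card_farTriples :
    2 * ∑ v, G.degree v ^ 2 + #G.farTriples =
      2 * #G.edgeFinset * Fintype.card V + #G.triangleTriples := by
  have hsplit : #{t : (V × V) × V | G.Adj t.1.1 t.1.2 ∧ G.Adj t.1.1 t.2} +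
      #{t : (V × V) × V | G.Adj t.1.1 t.1.2 ∧ G.Adj t.1.2 t.2} + #G.farTriples =
      #{t : (V × V) × V | G.Adj t.1.1 t.1.2} + #G.triangleTriples := by
    simp only [farTriples, triangleTriples, card_filter, ← sum_add_distrib]
    refine sum_congr rfl fun t _ => ?_
    by_cases G.Adj t.1.1 t.1.2 <;> by_cases G.Adj t.1.1 t.2 <;> by_cases G.Adj t.1.2 t.2 <;>
      simp [*]
  rw [card_filter_adj_adj_fst, card_filter_adj_adj_snd, card_filter_adj] at hsplit
  omega

lemma IsEdgeGate.mem_farTriples {a b c z w : V} (h : G.IsEdgeGate s(a, b) c z)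
    (haw : G.Adj a w) (hbw : G.Adj b w) : ((c, w), z) ∈ G.farTriples := by
  obtain ⟨u, he, hu⟩ := h
  have ⟨hcw, huw⟩ : G.Adj c w ∧ G.Adj u w := by
    rcases Sym2.eq_iff.mp he with ⟨rfl, rfl⟩ | ⟨rfl, rfl⟩ <;> exact ⟨‹_›, ‹_›⟩
  simp only [farTriples, mem_filter, mem_univ, true_and]
  exact ⟨hcw, hu.not_adj, hu.not_adj_of_adj hcw huw⟩

theorem card_triangleTriples_le_card_farTriples {k : ℕ} (hk : 3 ≤ k) (hdiam : G.ediam = k)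
    (hcrit : ∀ e ∈ G.edgeSet, G.ediam < (G.deleteEdges {e}).ediam) :
    #G.triangleTriples ≤ #G.farTriples := by
  let r : (V × V) × V → (V × V) × V → Prop := fun t s =>
    s.1.2 = t.2 ∧ G.IsEdgeGate s(t.1.1, t.1.2) s.1.1 s.2
  have := card_mul_le_card_mul (s := G.triangleTriples) (t := G.farTriples) r (m := 2) (n := 2)
    ?_ ?_
  · omega
  · rintro ⟨⟨a, b⟩, w⟩ ht
    simp only [triangleTriples, mem_filter, mem_univ, true_and] at ht
    obtain ⟨hab, haw, hbw⟩ := ht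
    obtain ⟨g₁, g₂, hne, hg₁, hg₂⟩ :=
      exists_two_isEdgeGate_of_lt_ediam_deleteEdges hk hdiam (hcrit _ hab) haw hbw
    calc 2 = #{((g₁.1, w), g₁.2), ((g₂.1, w), g₂.2)} :=
          (card_pair fun he => hne <| by
            simp only [Prod.mk.injEq] at he; exact Prod.ext he.1.1 he.2).symm
      _ ≤ _ := card_le_card <| by
          simp only [insert_subset_iff, singleton_subset_iff, mem_bipartiteAbove]
          exact ⟨⟨hg₁.mem_farTriples haw hbw, rfl, hg₁⟩, ⟨hg₂.mem_farTriples haw hbw, rfl, hg₂⟩⟩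
  · intro s _
    rcases (G.triangleTriples.bipartiteBelow r s).eq_empty_or_nonempty with hempty | ⟨t₀, ht₀⟩
    · simp [hempty]
    calc _ ≤ #{t₀, ((t₀.1.2, t₀.1.1), t₀.2)} := card_le_card fun t ht => ?_
      _ ≤ 2 := card_le_two
    rw [mem_bipartiteBelow] at ht ht₀
    have hw : t.2 = t₀.2 := ht.2.1.symm.trans ht₀.2.1
    rcases Sym2.eq_iff.mp (ht.2.2.unique ht₀.2.2) with ⟨h₁, h₂⟩ | ⟨h₁, h₂⟩ <;>
      simp [Prod.ext_iff, h₁, h₂, hw]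

end Counting

end SimpleGraph

theorem caccetta_haggkvist_higher_diameter {V : Type*} [Fintype V] (G : SimpleGraph V)
    (k : ℕ) (hk : 3 ≤ k) (hdiam : G.ediam = k)
    (hcrit : ∀ e ∈ G.edgeSet, G.ediam < (G.deleteEdges {e}).ediam)
    (n m : ℕ) (hn : n = Fintype.card V) (hm : m = G.edgeFinset.card) :
    ∑ v : V, (G.degree v) ^ 2 ≤ n * m := by
  have hcount := G.two_mul_sum_degree_sq_add_card_farTriples
  have hle := G.card_triangleTriples_le_card_farTriples hk hdiam hcrit
  subst hn hm
  linarith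
end

section
/- For k ≥ 2 and positive integers a, b, c, the graph formed by parts V₀,…,V_k with |V₀|=a, |V₁|=…=|V_{k−1}|=b, |V_k|=c, complete bipartite graphs between V₀,V₁ and between V_{k−1},V_k, and b vertex-disjoint paths from V₁ to V_{k−1} each meeting every Vᵢ (1 ≤ i ≤ k−1) in exactly one vertex, is a diameter-k-critical graph. -/
open scoped Classical

/-- Construction: parts `V₀, V₁, …, V_{k-1}, V_k` of sizes `a, b, …, b, c`, complete bipartite
graphs between `V₀, V₁` and between `V_{k-1}, V_k`, and `b` vertex-disjoint paths from `V₁` to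
`V_{k-1}`, each with exactly one vertex in every intermediate part.  The vertex `(j, i)` in the
middle component represents the `j`-th path's vertex in part `V_{i+1}`. -/
def constrK (k a b c : ℕ) : SimpleGraph (Fin a ⊕ ((Fin b × Fin (k - 1)) ⊕ Fin c)) where
  Adj x y :=
    match x, y with
    | .inl _, .inr (.inl (_, i)) => i.val = 0
    | .inr (.inl (_, i)), .inl _ => i.val = 0
    | .inr (.inl (j, i)), .inr (.inl (j', i')) =>
        j = j' ∧ (i.val + 1 = i'.val ∨ i'.val + 1 = i.val)
    | .inr (.inl (_, i)), .inr (.inr _) => i.val = k - 2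
    | .inr (.inr _), .inr (.inl (_, i)) => i.val = k - 2
    | _, _ => False
  symm := by
    constructor
    rintro (x | (⟨j, i⟩ | x)) (y | (⟨j', i'⟩ | y)) h <;> simp_all <;> tauto
  loopless := by
    constructor
    rintro (x | (⟨j, i⟩ | x)) h <;> simp_all

/-!
If `f : V → ℤ` changes by at most one along every edge, then `d(u, v) ≥ f v - f u`. Taking for `f`
the level (`i` on `Vᵢ`) gives `d(V₀, V_k) ≥ k`. After deleting an edge of the `j`-th path, a
modified level witnesses a pair at distance `k + 1`: either `V₀` and the top of path `j` (the edge
left `V₀`), or `V₀` and the part of path `j` above the edge (which is then reached only through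
`V_k`), or, symmetrically, `V_k` and the bottom of path `j`.

Conversely every vertex of `Vᵢ` lies on a path `V₀ — V₁ — ⋯ — V_k`, so two vertices of levels `i`
and `i'` are joined through `V₀` in `i + i'` steps or through `V_k` in `2k - i - i'` steps, and one
of these is at most `k`.
-/

namespace SimpleGraph

variable {V : Type*} {G : SimpleGraph V}

theorem Walk.sub_le_length {f : V → ℤ} (hf : ∀ ⦃u v⦄, G.Adj u v → f v ≤ f u + 1)
    {u v : V} (w : G.Walk u v) : f v - f u ≤ w.length := by
  induction w with
  | nil => simp
  | cons h _ ih =>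
    have := hf h
    rw [Walk.length_cons]
    push_cast
    linarith

theorem le_edist_of_le_sub {f : V → ℤ} (hf : ∀ ⦃u v⦄, G.Adj u v → f v ≤ f u + 1)
    {u v : V} {n : ℕ} (hn : n ≤ f v - f u) : (n : ℕ∞) ≤ G.edist u v :=
  le_iInf fun w => Nat.cast_le.mpr (by exact_mod_cast hn.trans (w.sub_le_length hf))

theorem lt_ediam_of_lt_sub {f : V → ℤ} (hf : ∀ ⦃u v⦄, G.Adj u v → f v ≤ f u + 1)
    {u v : V} {n : ℕ} (hn : n < f v - f u) : (n : ℕ∞) < G.ediam :=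
  calc (n : ℕ∞) < (n + 1 : ℕ) := Nat.cast_lt.mpr n.lt_succ_self
    _ ≤ G.edist u v := le_edist_of_le_sub hf (by push_cast; omega)
    _ ≤ G.ediam := edist_le_ediam

theorem edist_le_of_edist_le_add {u v : V} (w : V) {m n N : ℕ} (hu : G.edist u w ≤ m)
    (hv : G.edist w v ≤ n) (h : m + n ≤ N) : G.edist u v ≤ N :=
  calc G.edist u v ≤ G.edist u w + G.edist w v := G.edist_triangle
    _ ≤ m + n := add_le_add hu hv
    _ ≤ N := by exact_mod_cast h

end SimpleGraph

open SimpleGraph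

section constrK

variable {k a b c : ℕ}

local notation "Vertex" => Fin a ⊕ ((Fin b × Fin (k - 1)) ⊕ Fin c)

theorem constrK_adj_cases {P : Vertex → Vertex → Prop} (symm : ∀ ⦃u v⦄, P u v → P v u)
    (inl_mid : ∀ x j i, i.val = 0 → P (.inl x) (.inr (.inl (j, i))))
    (mid_mid : ∀ j (i i' : Fin (k - 1)), i.val + 1 = i'.val →
      P (.inr (.inl (j, i))) (.inr (.inl (j, i'))))
    (mid_inr : ∀ j i z, i.val = k - 2 → P (.inr (.inl (j, i))) (.inr (.inr z))) :
    ∀ ⦃u v⦄, (constrK k a b c).Adj u v → P u v := by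
  rintro (x | ⟨j, i⟩ | z) (y | ⟨j', i'⟩ | z') h
  all_goals first
    | exact h.elim
    | exact inl_mid _ _ _ h
    | exact symm (inl_mid _ _ _ h)
    | exact mid_inr _ _ _ h
    | exact symm (mid_inr _ _ _ h)
    | obtain ⟨rfl, h | h⟩ := h
      exacts [mid_mid _ _ _ h, symm (mid_mid _ _ _ h)]

theorem le_add_one_of_adj_of_le_constrK {H : SimpleGraph Vertex} (hH : H ≤ constrK k a b c)
    {f : Vertex → ℤ}
    (inl_mid : ∀ x j i, i.val = 0 → H.Adj (.inl x) (.inr (.inl (j, i))) →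
      |f (.inl x) - f (.inr (.inl (j, i)))| ≤ 1)
    (mid_mid : ∀ j (i i' : Fin (k - 1)), i.val + 1 = i'.val →
      H.Adj (.inr (.inl (j, i))) (.inr (.inl (j, i'))) →
      |f (.inr (.inl (j, i))) - f (.inr (.inl (j, i')))| ≤ 1)
    (mid_inr : ∀ j i z, i.val = k - 2 → H.Adj (.inr (.inl (j, i))) (.inr (.inr z)) →
      |f (.inr (.inl (j, i))) - f (.inr (.inr z))| ≤ 1) :
    ∀ ⦃u v⦄, H.Adj u v → f v ≤ f u + 1 := by
  intro u v huv
  have := constrK_adj_cases (P := fun u v => H.Adj u v → |f u - f v| ≤ 1)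
    (fun u v h h' => abs_sub_comm (f u) (f v) ▸ h h'.symm) inl_mid mid_mid mid_inr (hH huv) huv
  linarith [abs_le.mp this]

theorem constrK_edist_mid_mid_le (j : Fin b) {i i' : Fin (k - 1)} (h : i ≤ i') :
    (constrK k a b c).edist (.inr (.inl (j, i))) (.inr (.inl (j, i'))) ≤ (i'.val - i.val : ℕ) := by
  obtain ⟨n, hn⟩ := i'
  change i.val ≤ n at h
  induction n, h using Nat.le_induction with
  | base => simp
  | succ n hin ih =>
    have hn' : n < k - 1 := by omega
    have hadj : (constrK k a b c).Adj (.inr (.inl (j, ⟨n, hn'⟩))) (.inr (.inl (j, ⟨n + 1, hn⟩))) :=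
      ⟨rfl, .inl rfl⟩
    exact edist_le_of_edist_le_add _ (ih hn') (m := n - i.val) (n := 1)
      (edist_le_one_iff_adj_or_eq.mpr (.inl hadj)) (by dsimp only; omega)

theorem constrK_edist_inl_mid_le (x : Fin a) (j : Fin b) (i : Fin (k - 1)) :
    (constrK k a b c).edist (.inl x) (.inr (.inl (j, i))) ≤ (i.val + 1 : ℕ) := by
  have hadj : (constrK k a b c).Adj (.inl x) (.inr (.inl (j, ⟨0, i.pos⟩))) := rfl
  exact edist_le_of_edist_le_add _ (m := 1) (edist_le_one_iff_adj_or_eq.mpr (.inl hadj))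
    (constrK_edist_mid_mid_le j (Nat.zero_le i.val)) (by omega)

theorem constrK_edist_mid_inr_le (j : Fin b) (i : Fin (k - 1)) (z : Fin c) :
    (constrK k a b c).edist (.inr (.inl (j, i))) (.inr (.inr z)) ≤ (k - 1 - i.val : ℕ) := by
  have hadj : (constrK k a b c).Adj (.inr (.inl (j, ⟨k - 2, by have := i.isLt; omega⟩)))
      (.inr (.inr z)) := rfl
  exact edist_le_of_edist_le_add _ (constrK_edist_mid_mid_le j (show i.val ≤ k - 2 by omega))
    (n := 1) (edist_le_one_iff_adj_or_eq.mpr (.inl hadj)) (by omega)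

theorem constrK_ediam_le (hk : 2 ≤ k) (ha : 0 < a) (hb : 0 < b) (hc : 0 < c) :
    (constrK k a b c).ediam ≤ k := by
  let x₀ : Fin a := ⟨0, ha⟩
  let j₀ : Fin b := ⟨0, hb⟩
  let z₀ : Fin c := ⟨0, hc⟩
  let first : Fin (k - 1) := ⟨0, by omega⟩
  let last : Fin (k - 1) := ⟨k - 2, by omega⟩
  have bot := constrK_edist_inl_mid_le (k := k) (a := a) (b := b) (c := c)
  have top := constrK_edist_mid_inr_le (k := k) (a := a) (b := b) (c := c)
  have bot' : ∀ x j i, (constrK k a b c).edist (.inr (.inl (j, i))) (.inl x) ≤ (i.val + 1 : ℕ) :=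
    fun x j i => edist_comm (G := constrK k a b c) ▸ bot x j i
  have top' : ∀ j i z, (constrK k a b c).edist (.inr (.inr z)) (.inr (.inl (j, i))) ≤
      (k - 1 - i.val : ℕ) :=
    fun j i z => edist_comm (G := constrK k a b c) ▸ top j i z
  refine ediam_le_of_edist_le ?_
  rintro (x | ⟨j, i⟩ | z) (y | ⟨j', i'⟩ | z')
  · exact edist_le_of_edist_le_add _ (bot x j₀ first) (bot' y j₀ first) (by dsimp [first]; omega)
  · exact (bot x j' i').trans (by norm_cast; omega)
  · exact edist_le_of_edist_le_add _ (bot x j₀ last) (top j₀ last z') (by dsimp [last]; omega)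
  · exact (bot' y j i).trans (by norm_cast; omega)
  · by_cases h : i.val + i'.val + 2 ≤ k
    · exact edist_le_of_edist_le_add _ (bot' x₀ j i) (bot x₀ j' i') (by omega)
    · exact edist_le_of_edist_le_add _ (top j i z₀) (top' j' i' z₀) (by omega)
  · exact (top j i z').trans (by norm_cast; omega)
  · exact edist_le_of_edist_le_add _ (top' j₀ last z) (bot' y j₀ last) (by dsimp [last]; omega)
  · exact (top' j' i' z).trans (by norm_cast; omega)
  · exact edist_le_of_edist_le_add _ (top' j₀ last z) (top j₀ last z') (by dsimp [last]; omega)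

theorem le_constrK_ediam (ha : 0 < a) (hc : 0 < c) : (k : ℕ∞) ≤ (constrK k a b c).ediam := by
  let level : Vertex → ℤ := Sum.elim (fun _ => 0) (Sum.elim (fun p => p.2.val + 1) (fun _ => k))
  have hf : ∀ ⦃u v⦄, (constrK k a b c).Adj u v → level v ≤ level u + 1 := by
    refine le_add_one_of_adj_of_le_constrK le_rfl ?_ ?_ ?_ <;>
    · intros
      simp only [level, Sum.elim_inl, Sum.elim_inr, abs_le]
      omega
  exact (le_edist_of_le_sub hf (u := .inl ⟨0, ha⟩) (v := .inr (.inr ⟨0, hc⟩))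
    (by simp [level])).trans edist_le_ediam

theorem constrK_lt_ediam_deleteEdges_inl_mid (x : Fin a) (j : Fin b) (i : Fin (k - 1))
    (hi : i.val = 0) :
    (k : ℕ∞) < ((constrK k a b c).deleteEdges {s(.inl x, .inr (.inl (j, i)))}).ediam := by
  let f : Vertex → ℤ :=
    Sum.elim (fun x' => if x' = x then 0 else 2)
      (Sum.elim (fun p => p.2.val + 1 + if p.1 = j then 2 else 0) (fun _ => k))
  have hf : ∀ ⦃u v⦄, ((constrK k a b c).deleteEdges {s(.inl x, .inr (.inl (j, i)))}).Adj u v →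
      f v ≤ f u + 1 := by
    refine le_add_one_of_adj_of_le_constrK (deleteEdges_le _) ?inl_mid ?_ ?_
    case inl_mid =>
      intro x' j' i' hi' hadj
      simp only [f, Sum.elim_inl, Sum.elim_inr, abs_le]
      split_ifs with hx hj
      · obtain rfl : i' = i := Fin.ext (hi'.trans hi.symm)
        subst hx hj
        exact ((deleteEdges_adj.1 hadj).2 rfl).elim
      all_goals omega
    all_goals
      intros
      simp only [f, Sum.elim_inl, Sum.elim_inr, abs_le]
      split_ifs <;> omega
  have hl : k - 2 < k - 1 := by have := i.isLt; omega
  exact lt_ediam_of_lt_sub hf (u := .inl x) (v := .inr (.inl (j, ⟨k - 2, hl⟩)))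
    (by simp only [f, Sum.elim_inl, Sum.elim_inr, ↓reduceIte]; omega)

theorem constrK_lt_ediam_deleteEdges_mid_mid (ha : 0 < a) (j : Fin b) (i i' : Fin (k - 1))
    (hi : i.val + 1 = i'.val) :
    (k : ℕ∞) < ((constrK k a b c).deleteEdges
      {s(.inr (.inl (j, i)), .inr (.inl (j, i')))}).ediam := by
  let f : Vertex → ℤ :=
    Sum.elim (fun _ => 0)
      (Sum.elim (fun p => if p.1 = j ∧ i'.val ≤ p.2.val then 2 * k - 1 - p.2.val else p.2.val + 1)
        (fun _ => k))
  have hf : ∀ ⦃u v⦄, ((constrK k a b c).deleteEdges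
      {s(.inr (.inl (j, i)), .inr (.inl (j, i')))}).Adj u v → f v ≤ f u + 1 := by
    refine le_add_one_of_adj_of_le_constrK (deleteEdges_le _) ?_ ?mid_mid ?_
    case mid_mid =>
      intro j₁ m m' hm hadj
      simp only [f, Sum.elim_inl, Sum.elim_inr, abs_le]
      split_ifs with h₁ h₂ h₂
      · omega
      · exact absurd ⟨h₁.1, by omega⟩ h₂
      · have hlt : m.val < i'.val := by
          by_contra
          exact h₁ ⟨h₂.1, by omega⟩
        obtain rfl : m = i := Fin.ext (by omega)
        obtain rfl : m' = i' := Fin.ext (by omega)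
        obtain rfl := h₂.1
        exact ((deleteEdges_adj.1 hadj).2 rfl).elim
      · omega
    all_goals
      intros
      simp only [f, Sum.elim_inl, Sum.elim_inr, abs_le]
      split_ifs <;> omega
  have hi' := i'.isLt
  exact lt_ediam_of_lt_sub hf (u := .inl ⟨0, ha⟩) (v := .inr (.inl (j, i')))
    (by simp only [f, Sum.elim_inl, Sum.elim_inr, le_refl, and_self, ↓reduceIte]; omega)

theorem constrK_lt_ediam_deleteEdges_mid_inr (j : Fin b) (i : Fin (k - 1)) (z : Fin c)
    (hi : i.val = k - 2) :
    (k : ℕ∞) < ((constrK k a b c).deleteEdges {s(.inr (.inl (j, i)), .inr (.inr z))}).ediam := by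
  let f : Vertex → ℤ :=
    Sum.elim (fun _ => k)
      (Sum.elim (fun p => k - 1 - p.2.val + if p.1 = j then 2 else 0)
        (fun z' => if z' = z then 0 else 2))
  have hf : ∀ ⦃u v⦄, ((constrK k a b c).deleteEdges
      {s(.inr (.inl (j, i)), .inr (.inr z))}).Adj u v → f v ≤ f u + 1 := by
    refine le_add_one_of_adj_of_le_constrK (deleteEdges_le _) ?_ ?_ ?mid_inr
    case mid_inr =>
      intro j' i' z' hi' hadj
      simp only [f, Sum.elim_inl, Sum.elim_inr, abs_le]
      split_ifs with hj hz
      · obtain rfl : i' = i := Fin.ext (hi'.trans hi.symm)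
        subst hj hz
        exact ((deleteEdges_adj.1 hadj).2 rfl).elim
      all_goals omega
    all_goals
      intros
      simp only [f, Sum.elim_inl, Sum.elim_inr, abs_le]
      split_ifs <;> omega
  exact lt_ediam_of_lt_sub hf (u := .inr (.inr z)) (v := .inr (.inl (j, ⟨0, i.pos⟩)))
    (by simp only [f, Sum.elim_inl, Sum.elim_inr, ↓reduceIte]; omega)

end constrK

theorem constrK_diam_k_critical (k a b c : ℕ) (hk : 2 ≤ k)
    (ha : 1 ≤ a) (hb : 1 ≤ b) (hc : 1 ≤ c) :
    (constrK k a b c).ediam = k ∧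
      ∀ e ∈ (constrK k a b c).edgeSet,
        (k : ℕ∞) < ((constrK k a b c).deleteEdges {e}).ediam := by
  refine ⟨le_antisymm (constrK_ediam_le hk ha hb hc) (le_constrK_ediam ha hc), fun e he => ?_⟩
  induction e using Sym2.ind with
  | h u v =>
    exact constrK_adj_cases
      (P := fun u v => (k : ℕ∞) < ((constrK k a b c).deleteEdges {s(u, v)}).ediam)
      (fun u v h => Sym2.eq_swap (a := u) ▸ h)
      constrK_lt_ediam_deleteEdges_inl_mid (constrK_lt_ediam_deleteEdges_mid_mid ha)
      constrK_lt_ediam_deleteEdges_mid_inr he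
end

section
/- For each fixed k ≥ 3, there exists an infinite family of diameter-k-critical graphs on n vertices with m edges such that ∑_v d_v² ≥ (1 − o(1))·n·m as n → ∞. -/
/-!
The broom on `n` vertices — a path of length `k` whose second-to-last vertex also carries
`n - k - 1` further leaves — is a tree of diameter `k`. Deleting any edge of a tree disconnects
it, so the broom is diameter-`k`-critical. It has `m = n - 1` edges and its hub has degree at
least `n - k`, so `∑ d_v² ≥ (n - k)² ≥ (1 - ε) n m` as soon as `2k ≤ εn`.
-/

open scoped Classical

/-- A graph is diameter-`k`-critical if it has diameter `k` and deleting any edge strictly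
increases the diameter. -/
def IsDiamKCritical {V : Type*} (G : SimpleGraph V) (k : ℕ) : Prop :=
  G.ediam = k ∧ ∀ e ∈ G.edgeSet, (k : ℕ∞) < (G.deleteEdges {e}).ediam

namespace SimpleGraph

open Finset

section General

variable {V : Type*} {G : SimpleGraph V}

lemma isBridge_of_forall_adj_mem_notMem {S : Set V} {u v : V} (hu : u ∈ S) (hv : v ∉ S)
    (hS : ∀ x y, G.Adj x y → x ∈ S → y ∉ S → x = u ∧ y = v) : G.IsBridge s(u, v) := by
  rintro ⟨p⟩
  obtain ⟨d, -, hx, hy⟩ := p.exists_boundary_dart S hu hv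
  obtain ⟨hadj, hne⟩ := (deleteEdges_adj ..).1 d.adj
  obtain ⟨hxu, hyv⟩ := hS _ _ hadj hx hy
  exact hne (by rw [hxu, hyv]; rfl)

lemma IsAcyclic.ediam_deleteEdges_eq_top (hG : G.IsAcyclic) {e : Sym2 V} (he : e ∈ G.edgeSet) :
    (G.deleteEdges {e}).ediam = ⊤ := by
  induction e using Sym2.ind with
  | _ u v =>
    have hbridge : ¬ (G.deleteEdges {s(u, v)}).Reachable u v :=
      isBridge_iff.1 (isAcyclic_iff_forall_isBridge.1 hG he)
    exact ediam_eq_top_of_not_preconnected fun h => hbridge (h u v)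

lemma IsAcyclic.isDiamKCritical (hG : G.IsAcyclic) {k : ℕ} (hk : G.ediam = k) :
    IsDiamKCritical G k :=
  ⟨hk, fun e he => by simp [hG.ediam_deleteEdges_eq_top he]⟩

lemma Walk.apply_le_apply_add_length {f : V → ℕ} (hf : ∀ x y, G.Adj x y → f y ≤ f x + 1)
    {u v : V} (p : G.Walk u v) : f v ≤ f u + p.length := by
  induction p with
  | nil => simp
  | cons h p ih =>
    have := hf _ _ h
    simp only [Walk.length_cons]
    omega

lemma apply_le_apply_add_edist {f : V → ℕ} (hf : ∀ x y, G.Adj x y → f y ≤ f x + 1)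
    (u v : V) : (f v : ℕ∞) ≤ f u + G.edist u v := by
  by_cases huv : G.Reachable u v
  · obtain ⟨p, hp⟩ := huv.exists_walk_length_eq_edist
    rw [← hp]
    exact_mod_cast p.apply_le_apply_add_length hf
  · simp [edist_eq_top_of_not_reachable huv]

end General

section Broom

/-- The path `0 - 1 - ⋯ - k` with all further vertices hanging as leaves at `k - 1`:
the parent of a vertex `v ≠ 0` is `min (v - 1) (k - 1)`. -/
def broom (n k : ℕ) : SimpleGraph (Fin n) :=
  fromRel fun u v => 0 < v.val ∧ u.val = min (v.val - 1) (k - 1)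

variable {n k : ℕ}

lemma broom_adj {u v : Fin n} : (broom n k).Adj u v ↔
    (0 < v.val ∧ u.val = min (v.val - 1) (k - 1)) ∨
      (0 < u.val ∧ v.val = min (u.val - 1) (k - 1)) := by
  simp only [broom, fromRel_adj, ne_eq, and_iff_right_iff_imp, Fin.ext_iff]
  omega

lemma isBridge_broom_of_parent {u v : Fin n} (hv : 0 < v.val)
    (hu : u.val = min (v.val - 1) (k - 1)) : (broom n k).IsBridge s(u, v) := by
  by_cases hvk : v.val ≤ k - 1
  · refine isBridge_of_forall_adj_mem_notMem (S := {w | w.val < v.val})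
      (by simp only [Set.mem_ofPred_eq]; omega) (by simp) fun x y hxy hx hy => ?_
    simp only [Set.mem_ofPred_eq, not_lt] at hx hy
    rw [broom_adj] at hxy
    simp only [Fin.ext_iff]
    omega
  · refine isBridge_of_forall_adj_mem_notMem (S := {v}ᶜ)
      (by simp only [Set.mem_compl_iff, Set.mem_singleton_iff, Fin.ext_iff]; omega) (by simp)
      fun x y hxy hx hy => ?_
    simp only [Set.mem_compl_iff, Set.mem_singleton_iff, not_not, Fin.ext_iff] at hx hy ⊢
    rw [broom_adj] at hxy
    omega

lemma isAcyclic_broom (n k : ℕ) : (broom n k).IsAcyclic := by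
  refine isAcyclic_iff_forall_adj_isBridge.2 fun u v huv => ?_
  rcases broom_adj.1 huv with ⟨hv, hu⟩ | ⟨hu, hv⟩
  · exact isBridge_broom_of_parent hv hu
  · rw [Sym2.eq_swap]
    exact isBridge_broom_of_parent hu hv

lemma edist_broom_le_sub {i j : Fin n} (hij : i.val ≤ j.val) (hj : j.val ≤ k) :
    (broom n k).edist i j ≤ (j.val - i.val : ℕ) := by
  obtain ⟨d, hd⟩ := Nat.exists_eq_add_of_le hij
  induction d generalizing j with
  | zero =>
    obtain rfl : i = j := Fin.ext (by omega)
    simp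
  | succ d ih =>
    let j' : Fin n := ⟨j.val - 1, by omega⟩
    have hj' : j'.val = j.val - 1 := rfl
    have hadj : (broom n k).Adj j' j := broom_adj.2 (Or.inl ⟨by omega, by omega⟩)
    calc (broom n k).edist i j ≤ (broom n k).edist i j' + (broom n k).edist j' j :=
          SimpleGraph.edist_triangle
      _ ≤ (d : ℕ) + 1 := by
          gcongr
          · exact (ih (j := j') (by omega) (by omega) (by omega)).trans (by norm_cast; omega)
          · exact (edist_eq_one_iff_adj.2 hadj).le
      _ = (j.val - i.val : ℕ) := by norm_cast; omega

lemma edist_broom_le_of_val_eq (hk : 2 ≤ k) {c : Fin n} (hc : c.val = k - 1) (w : Fin n) :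
    (broom n k).edist w c ≤ (k - 1 : ℕ) := by
  by_cases hw : w.val ≤ k - 1
  · exact (edist_broom_le_sub (by omega) (by omega)).trans (by norm_cast; omega)
  · have hadj : (broom n k).Adj c w := broom_adj.2 (Or.inl ⟨by omega, by omega⟩)
    rw [edist_comm, edist_eq_one_iff_adj.2 hadj]
    exact_mod_cast (by omega : 1 ≤ k - 1)

lemma edist_broom_le (hk : 2 ≤ k) (u v : Fin n) : (broom n k).edist u v ≤ k := by
  wlog huv : u.val ≤ v.val generalizing u v
  · rw [edist_comm]
    exact this v u (by omega)
  by_cases hv : v.val ≤ k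
  · exact (edist_broom_le_sub huv hv).trans (by norm_cast; omega)
  · let c : Fin n := ⟨k - 1, by omega⟩
    have hadj : (broom n k).Adj c v := broom_adj.2 (Or.inl ⟨by omega, by simp only [c]; omega⟩)
    calc (broom n k).edist u v ≤ (broom n k).edist u c + (broom n k).edist c v :=
          SimpleGraph.edist_triangle
      _ ≤ (k - 1 : ℕ) + 1 := by
          gcongr
          · exact edist_broom_le_of_val_eq hk rfl u
          · exact (edist_eq_one_iff_adj.2 hadj).le
      _ = k := by norm_cast; omega

lemma ediam_broom (hk : 2 ≤ k) (hn : k < n) : (broom n k).ediam = k := by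
  refine le_antisymm (ediam_le_of_edist_le (edist_broom_le hk)) ?_
  -- `min v k` is the depth of `v` below the root `0`.
  have hdepth : ∀ x y : Fin n, (broom n k).Adj x y → min y.val k ≤ min x.val k + 1 := by
    intro x y hxy
    rw [broom_adj] at hxy
    omega
  let root : Fin n := ⟨0, by omega⟩
  calc (k : ℕ∞) = (min (⟨k, hn⟩ : Fin n).val k : ℕ) := by simp
    _ ≤ (min root.val k : ℕ) + (broom n k).edist root ⟨k, hn⟩ :=
        apply_le_apply_add_edist hdepth _ _
    _ ≤ (broom n k).ediam := by simpa [root] using edist_le_ediam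

lemma isTree_broom (hk : 2 ≤ k) (hn : k < n) : (broom n k).IsTree :=
  have : Nonempty (Fin n) := ⟨⟨0, by omega⟩⟩
  ⟨connected_of_ediam_ne_top (by simp [ediam_broom hk hn]), isAcyclic_broom n k⟩

lemma sub_le_degree_broom (hk : 0 < k) {c : Fin n} (hc : c.val = k - 1) :
    n - k ≤ (broom n k).degree c := by
  calc n - k = #{w : Fin n | k ≤ w.val} := by
        have := card_filter_add_card_filter_not (s := univ) (fun w : Fin n => w.val < k)
        simp only [Fin.card_filter_val_lt, not_lt, card_univ, Fintype.card_fin] at this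
        omega
    _ ≤ #((broom n k).neighborFinset c) := card_le_card fun w hw => by
        simp only [mem_filter, mem_univ, true_and] at hw
        rw [mem_neighborFinset, broom_adj]
        omega
    _ = (broom n k).degree c := card_neighborFinset_eq_degree _ c

end Broom

end SimpleGraph

lemma one_sub_mul_mul_le_sq {ε n m k d : ℝ} (hm₀ : 0 ≤ m) (hmn : m ≤ n) (hk : 0 ≤ k)
    (hkn : k ≤ n) (hd : n - k ≤ d) (hεn : 2 * k ≤ ε * n) : (1 - ε) * n * m ≤ d ^ 2 := by
  have hn : 0 ≤ n := hk.trans hkn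
  rcases le_or_gt ε 1 with hε | hε
  · calc (1 - ε) * n * m ≤ (1 - ε) * n * n := by gcongr
      _ ≤ (n - k) ^ 2 := by nlinarith
      _ ≤ d ^ 2 := by gcongr
  · nlinarith [mul_nonneg (by linarith : 0 ≤ ε - 1) (mul_nonneg hn hm₀), sq_nonneg d]

theorem caccetta_haggkvist_higher_diameter_tight (k : ℕ) (hk : 3 ≤ k) :
    ∀ ε : ℝ, 0 < ε → ∀ N : ℕ, ∃ n : ℕ, N ≤ n ∧ ∃ G : SimpleGraph (Fin n),
      IsDiamKCritical G k ∧
        (1 - ε) * n * G.edgeFinset.card ≤ ∑ v : Fin n, ((G.degree v : ℝ) ^ 2) := by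
  intro ε hε N
  obtain ⟨M, hM⟩ := exists_nat_ge (2 * k / ε)
  set n := N + k + 1 + M
  have hεn : 2 * (k : ℝ) ≤ ε * n := by
    rw [div_le_iff₀ hε] at hM
    have : (M : ℝ) ≤ n := by unfold n; push_cast; linarith
    nlinarith
  set G := SimpleGraph.broom n k
  refine ⟨n, by omega, G, (SimpleGraph.isAcyclic_broom n k).isDiamKCritical
    (SimpleGraph.ediam_broom (by omega) (by omega)), ?_⟩
  let c : Fin n := ⟨k - 1, by omega⟩
  have hm : G.edgeFinset.card + 1 = n := by
    simpa using (SimpleGraph.isTree_broom (by omega) (by omega : k < n)).card_edgeFinset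
  have hd : n - k ≤ G.degree c := SimpleGraph.sub_le_degree_broom (by omega) rfl
  calc (1 - ε) * n * G.edgeFinset.card ≤ (G.degree c : ℝ) ^ 2 := by
        refine one_sub_mul_mul_le_sq (by positivity) (by exact_mod_cast (by omega : _ ≤ n))
          (by positivity) (by exact_mod_cast (by omega : k ≤ n)) ?_ hεn
        rw [sub_le_iff_le_add]
        exact_mod_cast (by omega : n ≤ G.degree c + k)
    _ ≤ ∑ v : Fin n, (G.degree v : ℝ) ^ 2 :=
        Finset.single_le_sum (f := fun v => (G.degree v : ℝ) ^ 2)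
          (fun v _ => sq_nonneg _) (Finset.mem_univ c)
end

section
/- In a diameter-2-critical graph, every triangle T has at least two feet, and every foot of T is adjacent to exactly one vertex of T. Here, a vertex v ∉ T is a foot of T if there exist vertices x, y ∈ T such that v is adjacent to x, the path v–x–y has length 2, d(v,y)=2, and deleting the edge xy makes the distance between v and y exceed 2. -/
/-!
Deleting an edge `xy` of the triangle pushes some pair `a, b` beyond distance 2. The common
neighbour `z` of `x` and `y` shows that this pair is not `{x, y}`, so `a, b` are at distance 2 and
some path `a m b` runs through `xy`: one of `a, b` is an endpoint of `xy` and the other is a foot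
attached to the other endpoint. A foot `v` attached at `x` with partner `y` has no other neighbour
`u` in the triangle, since the path `v u y` would survive the deletion. The three edges of the
triangle thus yield feet avoiding `z`, `x` and `y` respectively, and these cannot all coincide
because every foot has a neighbour in the triangle.
-/

open scoped Classical

/-- `v` is a foot of the triangle `T`: `v ∉ T` and there are `x, y ∈ T` with `v–x–y` a path of
length 2 such that `d(v,y) = 2` and deleting the edge `xy` raises the distance from `v` to `y`
above 2. -/
def IsFoot {V : Type*} (G : SimpleGraph V) (T : Finset V) (v : V) : Prop :=
  v ∉ T ∧ ∃ x ∈ T, ∃ y ∈ T, G.Adj v x ∧ G.Adj x y ∧ G.dist v y = 2 ∧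
    2 < (G.deleteEdges {s(x, y)}).edist v y

namespace SimpleGraph

variable {V : Type*} {G : SimpleGraph V} {T : Finset V} {u v w a b x y : V} {e : Sym2 V}

lemma edist_deleteEdges_le_two (huv : G.Adj u v) (hvw : G.Adj v w) (h₁ : s(u, v) ≠ e)
    (h₂ : s(v, w) ≠ e) : (G.deleteEdges {e}).edist u w ≤ 2 := by
  simpa using (Walk.cons (deleteEdges_adj.2 ⟨huv, h₁⟩)
    (.cons (deleteEdges_adj.2 ⟨hvw, h₂⟩) .nil)).edist_le

lemma dist_eq_two_of_two_lt_edist_deleteEdges (hvu : G.Adj v u) (huw : G.Adj u w)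
    (h : 2 < (G.deleteEdges {s(u, w)}).edist v w) : G.dist v w = 2 := by
  obtain ⟨hvw, hnadj, -⟩ := two_lt_edist_iff.1 h
  have hGvw : ¬ G.Adj v w := fun hadj =>
    hnadj (deleteEdges_adj.2 ⟨hadj, by rw [Set.mem_singleton_iff, Sym2.congr_left]; exact hvu.ne⟩)
  have : G.edist v w = 2 := edist_eq_two_iff.2 ⟨hvw, hGvw, ⟨u, hvu, huw.symm⟩⟩
  simp [dist, this]

lemma eq_or_exists_of_two_lt_edist_deleteEdges (hab : G.edist a b ≤ 2)
    (h : 2 < (G.deleteEdges {e}).edist a b) :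
    s(a, b) = e ∨ ∃ m, G.Adj a m ∧ G.Adj m b ∧ (s(a, m) = e ∨ s(m, b) = e) := by
  obtain ⟨hne, hnadj, hcommon⟩ := two_lt_edist_iff.1 h
  by_cases hadj : G.Adj a b
  · exact .inl (by_contra fun he => hnadj (deleteEdges_adj.2 ⟨hadj, he⟩))
  obtain ⟨m, ham, hbm⟩ : (G.commonNeighbors a b).Nonempty := by
    by_contra hempty
    exact hab.not_gt (two_lt_edist_iff.2 ⟨hne, hadj, Set.not_nonempty_iff_eq_empty.1 hempty⟩)
  refine .inr ⟨m, ham, hbm.symm, ?_⟩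
  by_contra! hm
  have : m ∈ (G.deleteEdges {e}).commonNeighbors a b :=
    ⟨deleteEdges_adj.2 ⟨ham, hm.1⟩, deleteEdges_adj.2 ⟨hbm, by rw [Sym2.eq_swap]; exact hm.2⟩⟩
  simp [hcommon] at this

lemma eq_of_adj_of_two_lt_edist_deleteEdges (hT : G.IsClique (T : Set V)) (hu : u ∈ T)
    (hy : y ∈ T) (hvy : G.dist v y = 2) (h : 2 < (G.deleteEdges {s(x, y)}).edist v y)
    (hvu : G.Adj v u) : u = x := by
  by_contra hux
  have huy : u ≠ y := by
    rintro rfl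
    simp [dist_eq_one_iff_adj.2 hvu] at hvy
  refine h.not_ge (edist_deleteEdges_le_two hvu (hT hu hy huy) (fun he => ?_) ?_)
  · rcases Sym2.eq_iff.1 he with ⟨-, rfl⟩ | ⟨-, rfl⟩
    exacts [huy rfl, hux rfl]
  · rwa [Ne, Sym2.congr_left]

end SimpleGraph

section Feet

open SimpleGraph

variable {V : Type*} {G : SimpleGraph V} {T : Finset V} {v x y z : V}

theorem IsFoot.card_filter_adj_eq_one (hT : G.IsClique (T : Set V)) (hv : IsFoot G T v) :
    (T.filter fun u => G.Adj v u).card = 1 := by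
  obtain ⟨-, x, hx, y, hy, hvx, -, hvy, h⟩ := hv
  refine Finset.card_eq_one.2 ⟨x, Finset.eq_singleton_iff_unique_mem.2
    ⟨Finset.mem_filter.2 ⟨hx, hvx⟩, fun u hu => ?_⟩⟩
  rw [Finset.mem_filter] at hu
  exact eq_of_adj_of_two_lt_edist_deleteEdges hT hu.1 hy hvy h hu.2

/-- `z` keeps `x` and `y` within distance 2 in `G - xy`, so the pair this deletion pushes apart is
not `{x, y}`. -/
lemma IsDiamTwoCritical.exists_two_lt_edist_deleteEdges (hG : IsDiamTwoCritical G)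
    (hxy : G.Adj x y) (hxz : G.Adj x z) (hyz : G.Adj y z) :
    ∃ v u w, s(u, w) = s(x, y) ∧ G.Adj v u ∧ 2 < (G.deleteEdges {s(u, w)}).edist v w := by
  obtain ⟨a, b, hab⟩ : ∃ a b, 2 < (G.deleteEdges {s(x, y)}).edist a b := by
    simpa [ediam_eq_iSup_iSup_edist, lt_iSup_iff] using hG.2 _ hxy
  rcases eq_or_exists_of_two_lt_edist_deleteEdges (hG.1 ▸ edist_le_ediam) hab with
    he | ⟨m, ham, hmb, he | he⟩
  · have hxy' : (G.deleteEdges {s(x, y)}).edist x y ≤ 2 :=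
      edist_deleteEdges_le_two hxz hyz.symm (by rw [Ne, Sym2.congr_right]; exact hyz.ne')
        (by rw [Ne, Sym2.congr_left]; exact hxz.ne')
    rcases Sym2.eq_iff.1 he with ⟨rfl, rfl⟩ | ⟨rfl, rfl⟩
    · exact absurd hab hxy'.not_gt
    · exact absurd (edist_comm ▸ hab) hxy'.not_gt
  · have he' : s(m, a) = s(x, y) := Sym2.eq_swap.trans he
    exact ⟨b, m, a, he', hmb.symm, by rw [he', edist_comm]; exact hab⟩
  · exact ⟨a, m, b, he, ham, by rwa [he]⟩

lemma IsDiamTwoCritical.exists_isFoot_not_adj (hG : IsDiamTwoCritical G)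
    (hT : G.IsClique (T : Set V)) (hx : x ∈ T) (hy : y ∈ T) (hz : z ∈ T)
    (hxy : G.Adj x y) (hxz : G.Adj x z) (hyz : G.Adj y z) :
    ∃ v, IsFoot G T v ∧ ¬ G.Adj v z := by
  obtain ⟨v, u, w, huw, hvu, h⟩ := hG.exists_two_lt_edist_deleteEdges hxy hxz hyz
  have hu : u = x ∨ u = y := Sym2.mem_iff.1 (huw ▸ Sym2.mem_mk_left u w)
  have huT : u ∈ T := by rcases hu with rfl | rfl <;> assumption
  have hwT : w ∈ T := by
    rcases Sym2.mem_iff.1 (huw ▸ Sym2.mem_mk_right u w) with rfl | rfl <;> assumption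
  have huw' : G.Adj u w := by rw [← mem_edgeSet, huw]; exact hxy
  have hvw := dist_eq_two_of_two_lt_edist_deleteEdges hvu huw' h
  have hvT : v ∉ T := fun hvT => by
    have hne : v ≠ w := by rintro rfl; simp at hvw
    simp [dist_eq_one_iff_adj.2 (hT hvT hwT hne)] at hvw
  refine ⟨v, ⟨hvT, u, huT, w, hwT, hvu, huw', hvw, h⟩, fun hvz => ?_⟩
  have hzu : z = u := eq_of_adj_of_two_lt_edist_deleteEdges hT hz hwT hvw h hvz
  rcases hu with rfl | rfl
  exacts [hxz.ne hzu.symm, hyz.ne hzu.symm]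

end Feet

theorem triangle_has_two_feet {V : Type*} (G : SimpleGraph V) (hG : IsDiamTwoCritical G)
    (x y z : V) (hxy : G.Adj x y) (hyz : G.Adj y z) (hxz : G.Adj x z) :
    (∃ v w : V, v ≠ w ∧ IsFoot G {x, y, z} v ∧ IsFoot G {x, y, z} w) ∧
      ∀ v : V, IsFoot G {x, y, z} v →
        (({x, y, z} : Finset V).filter fun u => G.Adj v u).card = 1 := by
  have hT : G.IsClique (({x, y, z} : Finset V) : Set V) := by
    simp [SimpleGraph.isClique_insert, hxy, hxz, hyz, hxy.ne, hxz.ne, hyz.ne]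
  refine ⟨?_, fun v hv => hv.card_filter_adj_eq_one hT⟩
  obtain ⟨v₁, hv₁, hv₁z⟩ := hG.exists_isFoot_not_adj hT (by simp) (by simp) (by simp) hxy hxz hyz
  obtain ⟨v₂, hv₂, hv₂x⟩ :=
    hG.exists_isFoot_not_adj hT (by simp) (by simp) (by simp) hyz hxy.symm hxz.symm
  obtain ⟨v₃, hv₃, hv₃y⟩ :=
    hG.exists_isFoot_not_adj hT (by simp) (by simp) (by simp) hxz hxy hyz.symm
  rcases eq_or_ne v₁ v₂ with rfl | h₁₂
  · rcases eq_or_ne v₁ v₃ with rfl | h₁₃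
    · exact absurd (hv₁.card_filter_adj_eq_one hT)
        (by simp [Finset.filter_insert, Finset.filter_singleton, hv₁z, hv₂x, hv₃y])
    · exact ⟨v₁, v₃, h₁₃, hv₁, hv₃⟩
  · exact ⟨v₁, v₂, h₁₂, hv₁, hv₂⟩
end

section
/- In a diameter-2-critical graph, for distinct triangles T and T', the families F(T) and F(T') are disjoint, where F(T) is the set of triples {v,y,z} with y,z ∈ T adjacent, v a foot of T not adjacent to y or z. -/
open scoped Classical

/-- `T` is (the vertex set of) a triangle of `G`. -/
def IsTriangle {V : Type*} (G : SimpleGraph V) (T : Finset V) : Prop :=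
  T.card = 3 ∧ ∀ x ∈ T, ∀ y ∈ T, x ≠ y → G.Adj x y

/-- The family `F(T)` of triples `{v, y, z}` with `y, z ∈ T` adjacent, `v` a foot of `T`
adjacent to neither `y` nor `z`. -/
def footFamily {V : Type*} (G : SimpleGraph V) (T : Finset V) : Set (Finset V) :=
  {s | ∃ v y z : V, s = {v, y, z} ∧ y ∈ T ∧ z ∈ T ∧ G.Adj y z ∧ IsFoot G T v ∧
    ¬ G.Adj v y ∧ ¬ G.Adj v z}

/-!
Let `{v, y, z}` lie in `F(T) ∩ F(T')`. Since `yz` is an edge and `v` is adjacent to neither `y`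
nor `z`, the vertex `v` is recovered from the triple alone, so `v` is a foot of both triangles
and `y, z ∈ T ∩ T'`. The foot witness `v–x–y₀` for `T` has `x` the third vertex of `T` and
`y₀ ∈ {y, z}`; the third vertex `x'` of `T'` is a neighbour of `v` too. If `x' ≠ x`, then
`v–x'–y₀` is a path of length 2 avoiding the edge `xy₀`, contradicting the foot condition.
Hence `x = x'` and `T = {x, y, z} = T'`.
-/

open Finset SimpleGraph

section

variable {V : Type*}

theorem Finset.eq_triple_of_card_eq_three {s : Finset V} (hs : s.card = 3) {x y z : V}
    (hx : x ∈ s) (hy : y ∈ s) (hz : z ∈ s) (hxy : x ≠ y) (hxz : x ≠ z) (hyz : y ≠ z) :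
    s = {x, y, z} :=
  (eq_of_subset_of_card_le (by simp [insert_subset_iff, hx, hy, hz])
    (by rw [hs, card_eq_three.mpr ⟨x, y, z, hxy, hxz, hyz, rfl⟩])).symm

namespace SimpleGraph

variable {G : SimpleGraph V}

theorem eq_of_adj_of_adj_of_two_lt_edist_deleteEdges {v w x y : V}
    (h : 2 < (G.deleteEdges {s(x, y)}).edist v y) (hvw : G.Adj v w) (hwy : G.Adj w y) :
    w = x := by
  obtain ⟨hvy, -, hcommon⟩ := two_lt_edist_iff.mp h
  by_contra hwx
  have hw : w ∈ (G.deleteEdges {s(x, y)}).commonNeighbors v y := by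
    rw [mem_commonNeighbors, deleteEdges_adj, deleteEdges_adj]
    refine ⟨⟨hvw, ?_⟩, hwy.symm, ?_⟩
    · rw [Set.mem_singleton_iff, Sym2.eq_iff]
      rintro (⟨-, h⟩ | ⟨h, -⟩)
      exacts [hwy.ne h, hvy h]
    · rw [Set.mem_singleton_iff, Sym2.eq_iff]
      rintro (⟨-, h⟩ | ⟨-, h⟩)
      exacts [hwy.ne h, hwx h]
  simp [hcommon] at hw

/-- In a triple `{v, y, z}` with `yz` an edge and `v` adjacent to neither `y` nor `z`, `v` is
the only vertex with no neighbour in the triple. -/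
theorem eq_of_triple_eq_of_not_adj {v y z v' y' z' : V}
    (hs : ({v, y, z} : Finset V) = {v', y', z'}) (hyz : G.Adj y z)
    (hv'y' : ¬ G.Adj v' y') (hv'z' : ¬ G.Adj v' z') : v' = v := by
  have hisolated : ∀ w ∈ ({v, y, z} : Finset V), ¬ G.Adj v' w := by
    rw [hs]; simp [hv'y', hv'z']
  have hv' : v' ∈ ({v, y, z} : Finset V) := by rw [hs]; simp
  simp only [mem_insert, mem_singleton] at hv'
  rcases hv' with rfl | rfl | rfl
  · rfl
  · exact absurd hyz (hisolated _ (by simp))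
  · exact absurd hyz.symm (hisolated _ (by simp))

theorem isFoot_and_mem_of_triple_mem_footFamily {T : Finset V} {v y z : V}
    (hs : ({v, y, z} : Finset V) ∈ footFamily G T) (hyz : G.Adj y z) (hvy : v ≠ y)
    (hvz : v ≠ z) : IsFoot G T v ∧ y ∈ T ∧ z ∈ T := by
  obtain ⟨v', y', z', hs, hy'T, hz'T, -, hfoot, hv'y', hv'z'⟩ := hs
  have hv'v := eq_of_triple_eq_of_not_adj hs hyz hv'y' hv'z'
  subst v'
  have hy : y ∈ ({v, y', z'} : Finset V) := by rw [← hs]; simp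
  have hz : z ∈ ({v, y', z'} : Finset V) := by rw [← hs]; simp
  simp only [mem_insert, mem_singleton] at hy hz
  refine ⟨hfoot, ?_, ?_⟩ <;> aesop

end SimpleGraph

end

theorem footFamilies_disjoint_general {V : Type*} (G : SimpleGraph V)
    (T T' : Finset V) (hT : IsTriangle G T) (hT' : IsTriangle G T') (hne : T ≠ T') :
    Disjoint (footFamily G T) (footFamily G T') := by
  refine Set.disjoint_left.mpr fun s hsT hsT' => hne ?_
  obtain ⟨v, y, z, rfl, hyT, hzT, hyz, ⟨hvT, x, hxT, y₀, hy₀T, hvx, hxy₀, -, hcrit⟩, hvy, hvz⟩ :=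
    hsT
  obtain ⟨⟨-, x', hx'T', -, -, hvx', -⟩, hyT', hzT'⟩ :=
    isFoot_and_mem_of_triple_mem_footFamily hsT' hyz (ne_of_mem_of_not_mem hyT hvT).symm
      (ne_of_mem_of_not_mem hzT hvT).symm
  have hne_nbr {a b : V} (ha : G.Adj v a) (hb : ¬ G.Adj v b) : a ≠ b := fun h => hb (h ▸ ha)
  have hTeq : T = {x, y, z} := eq_triple_of_card_eq_three hT.1 hxT hyT hzT
    (hne_nbr hvx hvy) (hne_nbr hvx hvz) hyz.ne
  have hT'eq : T' = {x', y, z} := eq_triple_of_card_eq_three hT'.1 hx'T' hyT' hzT'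
    (hne_nbr hvx' hvy) (hne_nbr hvx' hvz) hyz.ne
  have hy₀ : y₀ = y ∨ y₀ = z := by
    rw [hTeq] at hy₀T
    simpa [hxy₀.ne'] using hy₀T
  have hx'y₀ : G.Adj x' y₀ := by
    rcases hy₀ with rfl | rfl
    exacts [hT'.2 _ hx'T' _ hyT' (hne_nbr hvx' hvy), hT'.2 _ hx'T' _ hzT' (hne_nbr hvx' hvz)]
  rw [hTeq, hT'eq, eq_of_adj_of_adj_of_two_lt_edist_deleteEdges hcrit hvx' hx'y₀]

theorem footFamilies_disjoint {V : Type*} (G : SimpleGraph V) (hG : IsDiamTwoCritical G)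
    (T T' : Finset V) (hT : IsTriangle G T) (hT' : IsTriangle G T') (hne : T ≠ T') :
    Disjoint (footFamily G T) (footFamily G T') :=
  footFamilies_disjoint_general G T T' hT hT' hne
end

section
/- Let G be a diameter-k-critical graph. For every edge e of G, there exists a path P of length ⌈k/3⌉ such that e lies on P, and deleting e increases the distance between the endpoints of P above ⌈k/3⌉. -/
/-!
Write `G'` for `G` minus the edge `e`, `ℓ = ⌈k/3⌉`, and pick `a, b` with `d_{G'}(a,b) > k`.
A shortest `a`–`b` path `P` of `G` has length `L ≤ k` and must use `e`. If a walk `q` sits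
inside a trail `p` and carries `e`, then the parts of `p` outside `q` avoid `e`, so the
triangle inequality in `G'` makes `d_{G'}` of the ends of `p` and of `q` differ by at most
`|p| - |q|`. If `L ≥ ℓ`, the stretch of length `ℓ` of `P` around `e` therefore has its ends at
`G'`-distance `> k - (L - ℓ) ≥ ℓ`. If `L < ℓ`, the same estimate for the single edge `e` gives
`d_{G'}(u,v) > k - L + 1 ≥ 2ℓ`; since the eccentricity of `u` is at least `k/2 ≥ ℓ - 1/2`, the
edge `e` lies on some path of length `ℓ`, and the estimate once more shows its ends are at
`G'`-distance `> ℓ`.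
-/

open scoped Classical

lemma ENat.coe_lt_of_lt_of_add_le_add {k p q ℓ : ℕ} {D m : ℕ∞} (hD : (k : ℕ∞) < D)
    (h : D + q ≤ m + p) (hℓ : p + ℓ ≤ k + q) : (ℓ : ℕ∞) < m := by
  by_contra! hm
  lift m to ℕ using ne_top_of_le_ne_top (ENat.natCast_ne_top ℓ) hm
  lift D to ℕ using ne_top_of_le_ne_top (by simp) (le_self_add.trans h)
  norm_cast at hD h hm
  omega

namespace SimpleGraph

variable {V : Type*} {G : SimpleGraph V} {e : Sym2 V} {a b u v x y z : V}

namespace Walk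

lemma edist_deleteEdges_le_length (p : G.Walk u v) (hp : e ∉ p.edges) :
    (G.deleteEdges {e}).edist u v ≤ p.length := by
  simpa using (p.toDeleteEdge e hp).edist_le

lemma edist_deleteEdges_le_length_add_length (A : G.Walk a x) (B : G.Walk y b)
    (hA : e ∉ A.edges) (hB : e ∉ B.edges) :
    (G.deleteEdges {e}).edist a b ≤ A.length + (G.deleteEdges {e}).edist x y + B.length :=
  calc (G.deleteEdges {e}).edist a b
      ≤ (G.deleteEdges {e}).edist a x + (G.deleteEdges {e}).edist x y +
          (G.deleteEdges {e}).edist y b :=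
        SimpleGraph.edist_triangle.trans (add_le_add_left SimpleGraph.edist_triangle _)
    _ ≤ A.length + (G.deleteEdges {e}).edist x y + B.length := by
        gcongr
        · exact A.edist_deleteEdges_le_length hA
        · exact B.edist_deleteEdges_le_length hB

lemma IsTrail.edist_deleteEdges_add_length_le {p : G.Walk a b} {q : G.Walk x y}
    (hp : p.IsTrail) (hq : q.IsSubwalk p) (he : e ∈ q.edges) :
    (G.deleteEdges {e}).edist a b + q.length ≤ (G.deleteEdges {e}).edist x y + p.length ∧
      (G.deleteEdges {e}).edist x y + q.length ≤ (G.deleteEdges {e}).edist a b + p.length := by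
  obtain ⟨A, B, rfl⟩ := hq
  have hnodup := hp.edges_nodup
  rw [edges_append, edges_append, List.nodup_append, List.nodup_append] at hnodup
  have hA : e ∉ A.edges := fun h => hnodup.1.2.2 e h e he rfl
  have hB : e ∉ B.edges := fun h => hnodup.2.2 e (List.mem_append_right _ he) e h rfl
  have hA' : e ∉ A.reverse.edges := by simpa using hA
  have hB' : e ∉ B.reverse.edges := by simpa using hB
  simp only [length_append, Nat.cast_add]
  constructor
  · calc _ ≤ A.length + (G.deleteEdges {e}).edist x y + B.length + q.length := by
          gcongr; exact edist_deleteEdges_le_length_add_length A B hA hB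
      _ = _ := by ring
  · calc _ ≤ A.reverse.length + (G.deleteEdges {e}).edist a b + B.reverse.length + q.length := by
          gcongr; exact edist_deleteEdges_le_length_add_length A.reverse B.reverse hA' hB'
      _ = _ := by simp only [length_reverse]; ring

lemma IsTrail.edist_deleteEdges_add_one_le {p : G.Walk a b} (hp : p.IsTrail)
    (h : s(u, v) ∈ p.edges) :
    (G.deleteEdges {s(u, v)}).edist a b + 1 ≤ (G.deleteEdges {s(u, v)}).edist u v + p.length ∧
      (G.deleteEdges {s(u, v)}).edist u v + 1 ≤
        (G.deleteEdges {s(u, v)}).edist a b + p.length := by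
  have hadj := p.adj_of_mem_edges h
  rcases (isSubwalk_toWalk_iff_mem_edges hadj).2 h with hs | hs
  · simpa using hp.edist_deleteEdges_add_length_le hs (by simp)
  · simpa [edist_comm (u := v)] using
      hp.edist_deleteEdges_add_length_le hs (by simp [Sym2.eq_swap])

lemma exists_isSubwalk_length_eq_of_mem_edges {ℓ : ℕ} (p : G.Walk a b) (he : e ∈ p.edges)
    (hℓ : 1 ≤ ℓ) (hℓp : ℓ ≤ p.length) :
    ∃ (x y : V) (q : G.Walk x y), q.IsSubwalk p ∧ q.length = ℓ ∧ e ∈ q.edges := by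
  induction p with
  | nil => simp at he
  | cons h p ih =>
    rw [edges_cons, List.mem_cons] at he
    rcases he with rfl | he
    · refine ⟨_, _, (cons h p).take ℓ, isSubwalk_take _ _, by simpa using hℓp, ?_⟩
      obtain ⟨n, rfl⟩ := Nat.exists_eq_add_of_le' hℓ
      rw [edges_take, edges_cons]; simp
    · rcases le_or_gt ℓ p.length with hℓp' | hℓp'
      · obtain ⟨x, y, q, hq, hqℓ, heq⟩ := ih he hℓp'
        exact ⟨x, y, q, hq.cons h, hqℓ, heq⟩
      · refine ⟨_, _, cons h p, isSubwalk_rfl _, ?_, by simp [he]⟩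
        simp only [length_cons] at hℓp ⊢
        omega

end Walk

open Walk

lemma Adj.exists_isPath_mem_edges_of_dist_le (hyx : G.Adj y x) (hxz : G.Reachable x z)
    (hle : G.dist x z ≤ G.dist y z) :
    ∃ Q : G.Walk y z, Q.IsPath ∧ s(y, x) ∈ Q.edges ∧ Q.length = G.dist x z + 1 := by
  obtain ⟨S, hS, hSlen⟩ := hxz.exists_path_of_dist
  have hy : y ∉ S.support := fun hy => by
    have := (dist_le (S.dropUntil y hy)).trans_lt (length_dropUntil_lt_length hy hyx.ne)
    omega
  exact ⟨cons hyx S, hS.cons hy, by simp, by simp [hSlen]⟩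

lemma Adj.exists_isPath_length_eq_of_le_dist {ℓ : ℕ} (h : G.Adj u v) (hz : G.Reachable u z)
    (hℓ : 1 ≤ ℓ) (hℓz : ℓ ≤ G.dist u z) :
    ∃ (x y : V) (Q : G.Walk x y), Q.IsPath ∧ Q.length = ℓ ∧ s(u, v) ∈ Q.edges := by
  obtain ⟨x, y, Q, hQ, hQe, hQlen⟩ : ∃ (x y : V) (Q : G.Walk x y),
      Q.IsPath ∧ s(u, v) ∈ Q.edges ∧ G.dist u z ≤ Q.length := by
    rcases le_total (G.dist u z) (G.dist v z) with huv | hvu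
    · obtain ⟨Q, hQ, hQe, hQlen⟩ := h.symm.exists_isPath_mem_edges_of_dist_le hz huv
      exact ⟨_, _, Q, hQ, Sym2.eq_swap ▸ hQe, by omega⟩
    · obtain ⟨Q, hQ, hQe, -⟩ := h.exists_isPath_mem_edges_of_dist_le (h.reachable.symm.trans hz) hvu
      exact ⟨_, _, Q, hQ, hQe, dist_le Q⟩
  obtain ⟨a, b, R, hR, hRlen, hRe⟩ :=
    Q.exists_isSubwalk_length_eq_of_mem_edges hQe hℓ (hℓz.trans hQlen)
  exact ⟨a, b, R, isPath_of_isSubwalk hR hQ, hRlen, hRe⟩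

lemma exists_reachable_le_dist_of_ediam_eq {k ℓ : ℕ} (h : G.ediam = k) (hℓ : 2 * ℓ ≤ k + 1)
    (u : V) : ∃ z, G.Reachable u z ∧ ℓ ≤ G.dist u z := by
  by_contra! hfar
  have hecc : G.eccent u ≤ (ℓ - 1 : ℕ) := by
    refine (eccent_le_iff u _).2 fun z => ?_
    have hz : G.Reachable u z :=
      reachable_of_edist_ne_top (ne_top_of_le_ne_top (h ▸ ENat.natCast_ne_top k) edist_le_ediam)
    rw [← hz.coe_dist_eq_edist]
    exact_mod_cast (by have := hfar z hz; omega)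
  have hk : (k : ℕ∞) ≤ 2 * (ℓ - 1 : ℕ) :=
    calc (k : ℕ∞) ≤ 2 * G.eccent u := h ▸ G.ediam_le_two_mul_eccent u
      _ ≤ 2 * (ℓ - 1 : ℕ) := by gcongr
  norm_cast at hk
  have := hfar u .rfl
  omega

end SimpleGraph

open SimpleGraph Walk

section

variable {V : Type*} {G : SimpleGraph V} {e : Sym2 V} {k : ℕ}

lemma IsDiamKCritical.exists_isPath_lt_edist_deleteEdges (hG : IsDiamKCritical G k)
    (he : e ∈ G.edgeSet) : ∃ (a b : V) (P : G.Walk a b), P.IsPath ∧ P.length ≤ k ∧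
      e ∈ P.edges ∧ (k : ℕ∞) < (G.deleteEdges {e}).edist a b := by
  obtain ⟨a, b, hab⟩ : ∃ a b, (k : ℕ∞) < (G.deleteEdges {e}).edist a b := by
    by_contra! h
    exact (hG.2 e he).not_ge (ediam_le_of_edist_le h)
  have hGab : G.edist a b ≤ k := hG.1 ▸ edist_le_ediam
  have hr := reachable_of_edist_ne_top (ne_top_of_le_ne_top (ENat.natCast_ne_top k) hGab)
  obtain ⟨P, hP, hPlen⟩ := hr.exists_path_of_dist
  have hPk : P.length ≤ k := by
    rw [← hr.coe_dist_eq_edist, ← hPlen] at hGab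
    exact_mod_cast hGab
  refine ⟨a, b, P, hP, hPk, ?_, hab⟩
  by_contra heP
  exact (hab.trans_le (P.edist_deleteEdges_le_length heP)).not_ge (by exact_mod_cast hPk)

end

theorem exists_short_associated_path {V : Type*} (G : SimpleGraph V) (k : ℕ) (hk : 2 ≤ k)
    (hG : IsDiamKCritical G k) :
    ∀ e ∈ G.edgeSet, ∃ (x y : V) (P : G.Walk x y), P.IsPath ∧ P.length = (k + 2) / 3 ∧
      e ∈ P.edges ∧ (((k + 2) / 3 : ℕ) : ℕ∞) < (G.deleteEdges {e}).edist x y := by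
  intro e he
  set ℓ := (k + 2) / 3
  obtain ⟨a, b, P, hP, hPk, heP, hab⟩ := hG.exists_isPath_lt_edist_deleteEdges he
  rcases le_or_gt ℓ P.length with hℓP | hPℓ
  · obtain ⟨x, y, R, hRP, hRℓ, heR⟩ :=
      P.exists_isSubwalk_length_eq_of_mem_edges heP (by omega) hℓP
    refine ⟨x, y, R, isPath_of_isSubwalk hRP hP, hRℓ, heR, ?_⟩
    have := (hP.isTrail.edist_deleteEdges_add_length_le hRP heR).1
    rw [hRℓ] at this
    exact ENat.coe_lt_of_lt_of_add_le_add hab this (by omega)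
  · induction e using Sym2.ind with | h u v => ?_
    obtain ⟨z, hz, hℓz⟩ := exists_reachable_le_dist_of_ediam_eq hG.1 (by omega : 2 * ℓ ≤ k + 1) u
    obtain ⟨x, y, Q, hQ, hQℓ, heQ⟩ := he.exists_isPath_length_eq_of_le_dist hz (by omega) hℓz
    refine ⟨x, y, Q, hQ, hQℓ, heQ, ?_⟩
    have h₁ := (hP.isTrail.edist_deleteEdges_add_one_le heP).1
    have h₂ := (hQ.isTrail.edist_deleteEdges_add_one_le heQ).2
    rw [hQℓ] at h₂
    have huv := ENat.coe_lt_of_lt_of_add_le_add (ℓ := k + 1 - P.length) hab h₁ (by omega)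
    exact ENat.coe_lt_of_lt_of_add_le_add huv h₂ (by omega)
end

section
/- Every diameter-k-critical graph on n vertices has at most 3n²/k edges. -/
/-!
Double count the pairs `(a, e)` such that deleting the edge `e` increases some distance from
the vertex `a`. For fixed `a`, every such `e` lies in a shortest-path tree rooted at `a`, so
there are at most `n` of them. For a fixed edge `e`, criticality gives `p, q` with
`d_{G-e}(p, q) > k`, and every `a` with `d(a, p) + d(a, q) ≤ k` qualifies. With `L = d(p, q)`,
the `L + 1` vertices of a `p`-`q` geodesic of `G`, and the `k - L + 1` vertices within
`(k - L) / 2` of either end of a `p`-`q` geodesic of `G - e` (or all of `V` when `G - e`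
separates `p` from `q`) show that at least `(k + 2) / 2` vertices qualify.
Hence `|E| (k + 2) / 2 ≤ n²`.
-/

open scoped Classical

namespace SimpleGraph

open Finset

variable {V : Type*} {G : SimpleGraph V}

lemma exists_path_of_edist_eq_coe {u v : V} {m : ℕ} (h : G.edist u v = m) :
    ∃ W : G.Walk u v, W.IsPath ∧ W.length = m := by
  have huv : G.Reachable u v := reachable_of_edist_ne_top (by simp [h])
  obtain ⟨W, hW, hWm⟩ := huv.exists_path_of_dist
  refine ⟨W, hW, ?_⟩
  have := huv.coe_dist_eq_edist
  rw [h, ← hWm] at this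
  exact_mod_cast this

lemma exists_adj_edist_eq_of_edist_eq_add_one {a z : V} {m : ℕ}
    (h : G.edist a z = m + 1) : ∃ y, G.Adj y z ∧ G.edist a y = m := by
  obtain ⟨W, hW⟩ := exists_walk_of_edist_eq_coe (k := m + 1) (by rw [edist_comm, h]; norm_cast)
  cases W with
  | nil => simp at hW
  | @cons _ y _ hadj W =>
    refine ⟨y, hadj.symm, le_antisymm ?_ ?_⟩
    · rw [edist_comm]
      simpa [Nat.succ_inj.mp hW] using edist_le W
    · have : (m : ℕ∞) + 1 ≤ G.edist a y + 1 := by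
        rw [← h, ← edist_eq_one_iff_adj.mpr hadj.symm]
        exact SimpleGraph.edist_triangle
      exact (ENat.add_le_add_iff_right ENat.one_ne_top).mp this

lemma add_one_le_card_of_ediam_eq [Fintype V] [Nonempty V] {k : ℕ} (h : G.ediam = k) :
    k + 1 ≤ Fintype.card V := by
  obtain ⟨u, v, huv⟩ := G.exists_edist_eq_ediam_of_finite
  rw [h] at huv
  obtain ⟨W, hW, hWk⟩ := exists_path_of_edist_eq_coe huv
  exact hWk ▸ hW.length_lt

lemma Walk.edist_getVert_le {u v : V} (W : G.Walk u v) (i : ℕ) :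
    G.edist u (W.getVert i) ≤ i ∧ G.edist (W.getVert i) v ≤ (W.length - i : ℕ) := by
  constructor
  · calc G.edist u (W.getVert i) ≤ (W.take i).length := edist_le _
      _ ≤ i := by rw [Walk.take_length]; exact_mod_cast min_le_left _ _
  · calc G.edist (W.getVert i) v ≤ (W.drop i).length := edist_le _
      _ = (W.length - i : ℕ) := by rw [Walk.drop_length]

lemma Walk.edist_getVert_add_edist_getVert_le {u v : V} (W : G.Walk u v) {i : ℕ}
    (hi : i ≤ W.length) : G.edist (W.getVert i) u + G.edist (W.getVert i) v ≤ W.length := by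
  obtain ⟨hu, hv⟩ := W.edist_getVert_le i
  rw [edist_comm]
  calc G.edist u (W.getVert i) + G.edist (W.getVert i) v ≤ (i : ℕ∞) + (W.length - i : ℕ) :=
        add_le_add hu hv
    _ = W.length := by norm_cast; omega

lemma Walk.IsPath.card_le_card_filter {u v : V} [Fintype V] {W : G.Walk u v} (hW : W.IsPath)
    {I : Finset ℕ} (hI : ∀ i ∈ I, i ≤ W.length) {P : V → Prop} [DecidablePred P]
    (hP : ∀ i ∈ I, P (W.getVert i)) : #I ≤ #{x | P x} :=
  card_le_card_of_injOn W.getVert (fun i hi => by simpa using hP i hi)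
    (hW.getVert_injOn.mono fun i hi => hI i hi)

lemma add_one_le_card_filter_edist_add_edist_le [Fintype V] {p q : V} {k L : ℕ}
    (hL : G.edist p q = L) (hLk : L ≤ k) : L + 1 ≤ #{a | G.edist a p + G.edist a q ≤ k} := by
  obtain ⟨W, hW, hWL⟩ := exists_path_of_edist_eq_coe hL
  calc L + 1 = #(range (L + 1)) := (card_range _).symm
    _ ≤ _ := hW.card_le_card_filter (fun i hi => by rw [mem_range] at hi; omega) fun i hi => by
        refine (W.edist_getVert_add_edist_getVert_le (by rw [mem_range] at hi; omega)).trans ?_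
        exact_mod_cast hWL.trans_le hLk

lemma sub_add_one_le_card_filter_edist_add_edist_le [Fintype V] {H : SimpleGraph V} (hHG : H ≤ G)
    {p q : V} {k L D : ℕ} (hL : G.edist p q = L) (hD : H.edist p q = D) (hLk : L ≤ k)
    (hkD : k < D) : k - L + 1 ≤ #{a | G.edist a p + G.edist a q ≤ k} := by
  obtain ⟨W, hW, hWD⟩ := exists_path_of_edist_eq_coe hD
  set r := (k - L) / 2
  have hI : #(range (r + 1) ∪ Icc (D - r) D) = 2 * r + 2 := by
    have : Disjoint (range (r + 1)) (Icc (D - r) D) :=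
      Finset.disjoint_left.mpr fun i hi hi' => by simp only [mem_range, mem_Icc] at hi hi'; omega
    rw [card_union_of_disjoint this, card_range, Nat.card_Icc]
    omega
  refine (by omega : k - L + 1 ≤ 2 * r + 2).trans (hI ▸ hW.card_le_card_filter ?_ ?_)
  · intro i hi
    simp only [mem_union, mem_range, mem_Icc] at hi
    omega
  intro i hi
  have hx : G.edist (W.getVert i) p ≤ i := by
    rw [edist_comm]
    exact (edist_anti hHG).trans (W.edist_getVert_le i).1
  have hy : G.edist (W.getVert i) q ≤ (D - i : ℕ) :=
    (edist_anti hHG).trans (hWD ▸ (W.edist_getVert_le i).2)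
  set x := G.edist (W.getVert i) p
  set y := G.edist (W.getVert i) q
  have hxy : y ≤ x + L := hL ▸ SimpleGraph.edist_triangle
  have hyx : x ≤ y + L := by
    rw [← hL, edist_comm (u := p)]
    exact SimpleGraph.edist_triangle
  simp only [mem_union, mem_range, mem_Icc] at hi
  rcases hi with hi | hi
  · calc x + y ≤ i + (i + L) := add_le_add hx (hxy.trans (by gcongr))
      _ ≤ k := by exact_mod_cast (by omega : i + (i + L) ≤ k)
  · calc x + y ≤ ((D - i : ℕ) + L) + (D - i : ℕ) := add_le_add (hyx.trans (by gcongr)) hy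
      _ ≤ k := by exact_mod_cast (by omega : (D - i) + L + (D - i) ≤ k)

def IsDistCritical (G : SimpleGraph V) (a : V) (e : Sym2 V) : Prop :=
  ∃ b, G.edist a b < (G.deleteEdges {e}).edist a b

lemma edist_deleteEdges_le_of_parent {a : V} {e : Sym2 V} (π : V → V)
    (hπ : ∀ z (m : ℕ), G.edist a z = m + 1 → G.Adj (π z) z ∧ G.edist a (π z) = m)
    (he : ∀ z, s(π z, z) ≠ e) (b : V) :
    (G.deleteEdges {e}).edist a b ≤ G.edist a b := by
  suffices ∀ m : ℕ, ∀ z, G.edist a z = m → (G.deleteEdges {e}).edist a z ≤ m by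
    cases h : G.edist a b with
    | top => exact le_top
    | coe m => exact this m b h
  intro m
  induction m with
  | zero =>
    intro z hz
    rw [Nat.cast_zero, edist_eq_zero_iff] at hz
    simp [hz]
  | succ m ih =>
    intro z hz
    obtain ⟨hadj, hm⟩ := hπ z m (by exact_mod_cast hz)
    have hadj' : (G.deleteEdges {e}).Adj (π z) z := by simpa using ⟨hadj, he z⟩
    calc (G.deleteEdges {e}).edist a z
        ≤ (G.deleteEdges {e}).edist a (π z) + (G.deleteEdges {e}).edist (π z) z :=
          SimpleGraph.edist_triangle
      _ ≤ m + 1 := by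
          rw [edist_eq_one_iff_adj.mpr hadj']
          gcongr
          exact ih _ hm
      _ = (m + 1 : ℕ) := by norm_cast

lemma card_filter_isDistCritical_le [Fintype V] [Fintype G.edgeSet] (a : V) :
    #{e ∈ G.edgeFinset | G.IsDistCritical a e} ≤ Fintype.card V := by
  have hparent : ∀ z, ∃ y, ∀ m : ℕ, G.edist a z = m + 1 → G.Adj y z ∧ G.edist a y = m := by
    intro z
    by_cases h : ∃ m : ℕ, G.edist a z = m + 1
    · obtain ⟨m, hm⟩ := h
      obtain ⟨y, hy⟩ := exists_adj_edist_eq_of_edist_eq_add_one hm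
      refine ⟨y, fun m' hm' => ?_⟩
      obtain rfl : m' = m := by have := hm'.symm.trans hm; norm_cast at this; omega
      exact hy
    · exact ⟨z, fun m hm => absurd ⟨m, hm⟩ h⟩
  -- `π z` is a BFS parent of `z`; the tree of edges `s(π z, z)` preserves all distances from `a`.
  choose π hπ using hparent
  calc #{e ∈ G.edgeFinset | G.IsDistCritical a e}
      ≤ #(univ.image fun z => s(π z, z)) := by
        refine card_le_card fun e he => ?_
        obtain ⟨b, hb⟩ := (mem_filter.mp he).2
        by_contra hne
        simp only [mem_image, mem_univ, true_and, not_exists] at hne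
        exact (edist_deleteEdges_le_of_parent π hπ hne b).not_gt hb
    _ ≤ Fintype.card V := card_image_le

lemma isDistCritical_of_edist_add_edist_lt {a p q : V} {e : Sym2 V}
    (h : G.edist a p + G.edist a q < (G.deleteEdges {e}).edist p q) : G.IsDistCritical a e := by
  by_contra hc
  simp only [IsDistCritical, not_exists, not_lt] at hc
  refine h.not_ge ?_
  calc (G.deleteEdges {e}).edist p q
      ≤ (G.deleteEdges {e}).edist p a + (G.deleteEdges {e}).edist a q :=
        SimpleGraph.edist_triangle
    _ = (G.deleteEdges {e}).edist a p + (G.deleteEdges {e}).edist a q := by rw [edist_comm]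
    _ ≤ G.edist a p + G.edist a q := add_le_add (hc p) (hc q)

end SimpleGraph

open SimpleGraph Finset

lemma IsDiamKCritical.add_two_le_two_mul_card_filter_isDistCritical {V : Type*} [Fintype V]
    {G : SimpleGraph V} {k : ℕ} (hG : IsDiamKCritical G k) {e : Sym2 V} (he : e ∈ G.edgeSet) :
    k + 2 ≤ 2 * #{a | G.IsDistCritical a e} := by
  have hdiam : ∀ u v, G.edist u v ≤ k := fun u v => hG.1 ▸ edist_le_ediam
  obtain ⟨p, q, hpq⟩ : ∃ p q, (k : ℕ∞) < (G.deleteEdges {e}).edist p q := by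
    by_contra! h
    exact (hG.2 e he).not_ge (ediam_le_of_edist_le fun u v => h u v)
  obtain ⟨L, hL⟩ := ENat.ne_top_iff_exists.mp ((hdiam p q).trans_lt (ENat.natCast_lt_top k)).ne
  replace hL := hL.symm
  have hLk : L ≤ k := by exact_mod_cast hL ▸ hdiam p q
  have hnear : #{a | G.edist a p + G.edist a q ≤ k} ≤ #{a | G.IsDistCritical a e} :=
    card_le_card fun a ha => by
      simp only [mem_filter, mem_univ, true_and] at ha ⊢
      exact isDistCritical_of_edist_add_edist_lt (ha.trans_lt hpq)
  have hgeod := add_one_le_card_filter_edist_add_edist_le hL hLk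
  have hfar : k - L + 1 ≤ #{a | G.IsDistCritical a e} := by
    cases hD : (G.deleteEdges {e}).edist p q with
    | top =>
      have : #{a | G.IsDistCritical a e} = Fintype.card V := by
        rw [filter_true_of_mem fun a _ => isDistCritical_of_edist_add_edist_lt (hD ▸
          (ENat.add_lt_top.mpr ⟨(hdiam a p).trans_lt (ENat.natCast_lt_top k),
            (hdiam a q).trans_lt (ENat.natCast_lt_top k)⟩)), card_univ]
      have : Nonempty V := ⟨p⟩
      have := add_one_le_card_of_ediam_eq hG.1
      omega
    | coe D =>
      exact (sub_add_one_le_card_filter_edist_add_edist_le (deleteEdges_le _) hL hD hLk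
        (by exact_mod_cast hD ▸ hpq)).trans hnear
  omega

theorem diam_k_critical_edge_bound {V : Type*} [Fintype V] (G : SimpleGraph V)
    (k : ℕ) (hk : 2 ≤ k) (hG : IsDiamKCritical G k) (n : ℕ) (hn : n = Fintype.card V) :
    (G.edgeFinset.card : ℝ) ≤ 3 * (n : ℝ) ^ 2 / (k : ℝ) := by
  have hcount : (#G.edgeFinset : ℝ) * ((k + 2) / 2) ≤ n * n := by
    have := card_nsmul_le_card_nsmul (R := ℝ) (fun e a => G.IsDistCritical a e)
      (s := G.edgeFinset) (t := univ) (m := ((k : ℝ) + 2) / 2) (n := (n : ℝ))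
      (fun e he => by
        have := hG.add_two_le_two_mul_card_filter_isDistCritical (mem_edgeFinset.mp he)
        rw [bipartiteAbove, div_le_iff₀ two_pos]
        exact_mod_cast (by omega : k + 2 ≤ #{a | G.IsDistCritical a e} * 2))
      (fun a _ => by exact_mod_cast hn ▸ card_filter_isDistCritical_le a)
    simpa [hn, nsmul_eq_mul] using this
  rw [le_div_iff₀ (Nat.cast_pos.mpr (by omega))]
  nlinarith
end

section
/- For any n-vertex graph H, e(H) + di(H) ≤ n²/2, where di(H) is the number of unordered vertex pairs {u,v} whose closed neighborhood intersections are empty (i.e., u and v have disjoint neighborhoods). -/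
open scoped Classical

/-- The number of unordered pairs of (distinct) vertices of `H` with disjoint neighborhoods. -/
noncomputable def disjointNeighborPairs {V : Type*} [Fintype V] (H : SimpleGraph V) : ℕ :=
  ((Finset.univ.powersetCard 2).filter fun s =>
    ∀ u ∈ s, ∀ v ∈ s, u ≠ v → Disjoint (H.neighborFinset u) (H.neighborFinset v)).card

/-! If `w` is a neighbour of `u` of maximum degree `m(u)`, every vertex whose neighbourhood is
disjoint from that of `u` lies outside `N(w)`, so `u` lies in at most `n - m(u)` such pairs and
`2 di(H) ≤ n² - ∑ m(u)`. On the other hand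
`∑ m(u) ≥ ∑_u ∑_{w ∼ u} d(w)/d(u) = ∑_{uw ∈ E} (d(w)/d(u) + d(u)/d(w)) ≥ 2 e(H)`
by AM–GM. -/

open Finset

theorem two_le_div_add_div {α : Type*} [Field α] [LinearOrder α] [IsStrictOrderedRing α]
    {a b : α} (ha : 0 < a) (hb : 0 < b) : 2 ≤ a / b + b / a := by
  rw [div_add_div _ _ hb.ne' ha.ne', le_div_iff₀ (by positivity)]
  nlinarith [sq_nonneg (a - b)]

namespace SimpleGraph

variable {V : Type*}

theorem card_cliqueFinset_two [Fintype V] [DecidableEq V] (G : SimpleGraph V) [DecidableRel G.Adj]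
    [Fintype G.edgeSet] : #(G.cliqueFinset 2) = #G.edgeFinset := by
  refine (card_bij (fun e _ => e.toFinset) ?_ ?_ ?_).symm
  · intro e he
    induction e using Sym2.ind with
    | h a b =>
      rw [mem_edgeFinset, mem_edgeSet] at he
      rw [mem_cliqueFinset_iff, isNClique_iff, Sym2.toFinset_mk_eq, coe_pair, isClique_pair,
        card_pair he.ne]
      exact ⟨fun _ => he, rfl⟩
  · intro e _ e' _ h
    exact Sym2.ext fun x => by rw [← Sym2.mem_toFinset, h, Sym2.mem_toFinset]
  · intro s hs
    rw [mem_cliqueFinset_iff, isNClique_iff] at hs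
    obtain ⟨a, b, hab, rfl⟩ := card_eq_two.mp hs.2
    exact ⟨s(a, b), by simpa using hs.1 (by simp) (by simp) hab, Sym2.toFinset_mk_eq⟩

@[simps]
def disjointNeighborGraph (H : SimpleGraph V) : SimpleGraph V where
  Adj u v := u ≠ v ∧ Disjoint (H.neighborSet u) (H.neighborSet v)
  symm.symm _ _ h := ⟨h.1.symm, h.2.symm⟩
  loopless.irrefl _ h := h.1 rfl

variable [Fintype V] (G H : SimpleGraph V)

theorem disjointNeighborPairs_eq_card_edgeFinset :
    disjointNeighborPairs H = #H.disjointNeighborGraph.edgeFinset := by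
  rw [disjointNeighborPairs, ← card_cliqueFinset_two]
  congr 1
  ext s
  simp only [mem_filter, mem_powersetCard_univ, mem_cliqueFinset_iff, isNClique_iff, IsClique,
    Set.Pairwise, mem_coe, disjointNeighborGraph_adj, neighborFinset_def, Set.disjoint_toFinset]
  aesop

noncomputable def maxNeighborDegree (u : V) : ℕ :=
  (G.neighborFinset u).sup fun w => G.degree w

theorem degree_disjointNeighborGraph_add_degree_le {u w : V} (huw : H.Adj u w) :
    H.disjointNeighborGraph.degree u + H.degree w ≤ Fintype.card V := by
  have hdisj : Disjoint (H.disjointNeighborGraph.neighborFinset u) (H.neighborFinset w) := by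
    refine Finset.disjoint_left.mpr fun v hv hwv => ?_
    rw [mem_neighborFinset, disjointNeighborGraph_adj] at hv
    rw [mem_neighborFinset] at hwv
    exact Set.disjoint_left.mp hv.2 huw hwv.symm
  rw [← card_neighborFinset_eq_degree, ← card_neighborFinset_eq_degree,
    ← card_union_of_disjoint hdisj]
  exact card_le_univ _

theorem degree_disjointNeighborGraph_add_maxNeighborDegree_le (u : V) :
    H.disjointNeighborGraph.degree u + H.maxNeighborDegree u ≤ Fintype.card V := by
  rcases (H.neighborFinset u).eq_empty_or_nonempty with h | h
  · simpa [maxNeighborDegree, h] using (H.disjointNeighborGraph.degree_lt_card_verts u).le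
  obtain ⟨w, hw, hmax⟩ := exists_mem_eq_sup _ h fun w => H.degree w
  rw [maxNeighborDegree, hmax]
  exact H.degree_disjointNeighborGraph_add_degree_le ((mem_neighborFinset _ _ _).mp hw)

theorem sum_sum_neighborFinset_comm {M : Type*} [AddCommMonoid M] (f : V → V → M) :
    ∑ u, ∑ w ∈ G.neighborFinset u, f u w = ∑ u, ∑ w ∈ G.neighborFinset u, f w u := by
  simp only [neighborFinset_eq_filter, sum_filter]
  rw [sum_comm]
  simp only [G.adj_comm]

theorem sum_degree_le_sum_sum_degree_div :
    ∑ u, (G.degree u : ℝ) ≤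
      ∑ u, ∑ w ∈ G.neighborFinset u, (G.degree w : ℝ) / G.degree u := by
  have hpair : ∀ u, ∀ w ∈ G.neighborFinset u,
      (2 : ℝ) ≤ (G.degree w : ℝ) / G.degree u + (G.degree u : ℝ) / G.degree w := by
    intro u w hw
    rw [mem_neighborFinset] at hw
    have hdu : 0 < G.degree u := G.degree_pos_iff_exists_adj u |>.mpr ⟨w, hw⟩
    have hdw : 0 < G.degree w := G.degree_pos_iff_exists_adj w |>.mpr ⟨u, hw.symm⟩
    exact two_le_div_add_div (by exact_mod_cast hdw) (by exact_mod_cast hdu)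
  have := calc
    2 * ∑ u, (G.degree u : ℝ) = ∑ u, ∑ _w ∈ G.neighborFinset u, (2 : ℝ) := by
      simp [mul_sum, card_neighborFinset_eq_degree, mul_comm]
    _ ≤ ∑ u, ∑ w ∈ G.neighborFinset u,
          ((G.degree w : ℝ) / G.degree u + G.degree u / G.degree w) :=
      sum_le_sum fun u _ => sum_le_sum (hpair u)
    _ = 2 * ∑ u, ∑ w ∈ G.neighborFinset u, (G.degree w : ℝ) / G.degree u := by
      simp only [sum_add_distrib]
      rw [G.sum_sum_neighborFinset_comm fun u w => (G.degree u : ℝ) / G.degree w, two_mul]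
  linarith

theorem sum_degree_div_le_maxNeighborDegree (u : V) :
    ∑ w ∈ G.neighborFinset u, (G.degree w : ℝ) / G.degree u ≤ G.maxNeighborDegree u := by
  rcases (G.degree u).eq_zero_or_pos with h | h
  · simp [h]
  rw [← sum_div, div_le_iff₀ (by exact_mod_cast h)]
  calc ∑ w ∈ G.neighborFinset u, (G.degree w : ℝ)
      ≤ #(G.neighborFinset u) • (G.maxNeighborDegree u : ℝ) :=
        sum_le_card_nsmul _ _ _ fun w hw => by exact_mod_cast le_sup (f := fun w => G.degree w) hw
    _ = G.maxNeighborDegree u * G.degree u := by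
        rw [card_neighborFinset_eq_degree, nsmul_eq_mul, mul_comm]

theorem sum_degree_le_sum_maxNeighborDegree :
    ∑ u, G.degree u ≤ ∑ u, G.maxNeighborDegree u := by
  have := (G.sum_degree_le_sum_sum_degree_div).trans
    (sum_le_sum fun u _ => G.sum_degree_div_le_maxNeighborDegree u)
  exact_mod_cast this

end SimpleGraph

theorem edges_add_disjointPairs_le {V : Type*} [Fintype V] (H : SimpleGraph V)
    (n : ℕ) (hn : n = Fintype.card V) :
    (H.edgeFinset.card : ℝ) + (disjointNeighborPairs H : ℝ) ≤ (n : ℝ) ^ 2 / 2 := by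
  subst hn
  have key : 2 * (#H.edgeFinset + disjointNeighborPairs H) ≤ Fintype.card V * Fintype.card V :=
    calc 2 * (#H.edgeFinset + disjointNeighborPairs H)
        = ∑ u, H.degree u + ∑ u, H.disjointNeighborGraph.degree u := by
          rw [H.disjointNeighborPairs_eq_card_edgeFinset, H.sum_degrees_eq_twice_card_edges,
            H.disjointNeighborGraph.sum_degrees_eq_twice_card_edges, mul_add]
      _ ≤ ∑ u, (H.disjointNeighborGraph.degree u + H.maxNeighborDegree u) := by
          rw [sum_add_distrib, add_comm]
          exact Nat.add_le_add_left H.sum_degree_le_sum_maxNeighborDegree _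
      _ ≤ ∑ _u : V, Fintype.card V :=
          sum_le_sum fun u _ => H.degree_disjointNeighborGraph_add_maxNeighborDegree_le u
      _ = Fintype.card V * Fintype.card V := by rw [sum_const, card_univ, smul_eq_mul]
  have : (2 : ℝ) * (#H.edgeFinset + disjointNeighborPairs H) ≤
      Fintype.card V * Fintype.card V := by
    exact_mod_cast key
  linarith
end

section
/- Let G be a graph of diameter at most 3 in which, for every edge e, there exist vertices x,y with d_G(x,y) ≤ 3 and d_{G−e}(x,y) ≥ 4. If a pair {x,y} is 2-critical in G (there is a unique (x,y)-path of length at most 2), or is critical (some edge e satisfies d_G(x,y) ≤ 3 and d_{G−e}(x,y) ≥ 4 with the shortest (x,y)-path of length 3), then x and y have disjoint neighborhoods in any subgraph G₀ of G obtained by deleting all edges lying on 2-critical paths of length two. -/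
/-!
A common neighbour `z` of `x` and `y` in `G₀` gives an `(x,y)`-path `x z y` of length two all of
whose edges survive in `G₀`. If `{x,y}` is 2-critical this path is the 2-critical one, so one of its
edges should have been deleted; if instead `d_G(x,y) = 3`, a path of length two cannot exist.
-/

open scoped Classical

namespace SimpleGraph.Walk

variable {V : Type*} {G : SimpleGraph V}

theorem isPath_cons_cons_nil {x z y : V} (hxz : G.Adj x z) (hzy : G.Adj z y) (hxy : x ≠ y) :
    (cons hxz (cons hzy nil)).IsPath := by
  simp [cons_isPath_iff, hxz.ne, hzy.ne, hxy]

end SimpleGraph.Walk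

open SimpleGraph

theorem critical_pairs_have_disjoint_neighborhoods_general {V : Type*}
    (G G₀ : SimpleGraph V)
    (hsub : G₀ ≤ G)
    (hdel : ∀ (x y : V) (p : G.Walk x y), p.IsPath → p.length = 2 →
      (∃! q : G.Walk x y, q.IsPath ∧ q.length ≤ 2) → ∃ e ∈ p.edges, e ∉ G₀.edgeSet)
    (x y : V) (hxy : x ≠ y)
    (h : (∃! p : G.Walk x y, p.IsPath ∧ p.length ≤ 2) ∨
      (G.edist x y = 3 ∧ ∃ e ∈ G.edgeSet, 3 < (G.deleteEdges {e}).edist x y)) :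
    Disjoint (G₀.neighborSet x) (G₀.neighborSet y) := by
  rw [Set.disjoint_left]
  intro z (hxz : G₀.Adj x z) (hyz : G₀.Adj y z)
  let q : G₀.Walk x y := .cons hxz (.cons hyz.symm .nil)
  have hq : q.IsPath := Walk.isPath_cons_cons_nil hxz hyz.symm hxy
  rcases h with hunique | ⟨hdist, -⟩
  · obtain ⟨e, he, he₀⟩ := hdel x y (q.mapLe hsub) (hq.mapLe hsub) (Walk.length_mapLe ..) hunique
    rw [Walk.edges_mapLe_eq_edges] at he
    exact he₀ (q.edges_subset_edgeSet he)
  · have : G.edist x y ≤ 2 := (q.mapLe hsub).edist_le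
    rw [hdist] at this
    exact absurd this (by decide)

theorem critical_pairs_have_disjoint_neighborhoods {V : Type*} [Fintype V]
    (G G₀ : SimpleGraph V)
    (hdiam : G.ediam ≤ 3)
    (hcrit : ∀ e ∈ G.edgeSet, ∃ x y : V,
      G.edist x y ≤ 3 ∧ 3 < (G.deleteEdges {e}).edist x y)
    (hsub : G₀ ≤ G)
    (hdel : ∀ (x y : V) (p : G.Walk x y), p.IsPath → p.length = 2 →
      (∃! q : G.Walk x y, q.IsPath ∧ q.length ≤ 2) → ∃ e ∈ p.edges, e ∉ G₀.edgeSet)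
    (x y : V) (hxy : x ≠ y)
    (h : (∃! p : G.Walk x y, p.IsPath ∧ p.length ≤ 2) ∨
      (G.edist x y = 3 ∧ ∃ e ∈ G.edgeSet, 3 < (G.deleteEdges {e}).edist x y)) :
    Disjoint (G₀.neighborSet x) (G₀.neighborSet y) :=
  critical_pairs_have_disjoint_neighborhoods_general G G₀ hsub hdel x y hxy h
end
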